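/- arXiv:2202.02348 — 7 statements merged into one kernel-verified Lean document; each statement's English description precedes it below -/
import Mathlib

section
/- Let Ω be a field with a valuation μ, let W be a finite subgroup of the additive group (Ω, +), and let ξ ∈ Ω satisfy μ(ξ) ≥ μ(ξ + w) for every w ∈ W (i.e. ξ has maximal valuation in its coset ξ + W). Then μ(ξ − w) = min(μ(ξ), μ(w)) for every w ∈ W, and consequently μ(∏_{w ∈ W} (ξ − w)) = Σ_{w ∈ W} min(μ(ξ), μ(w)). -/
/-- Let `Ω` be a field with a valuation `μ` (with values in `ℝ ∪ {+∞}`),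
`W` a finite subgroup of `(Ω, +)`, and `ξ ∈ Ω` with `μ ξ ≥ μ (ξ + w)` for every `w ∈ W`
(i.e. `ξ` has maximal valuation in its coset `ξ + W`). Then `μ (ξ - w) = min (μ ξ) (μ w)`
for every `w ∈ W`, and consequently
`μ (∏_{w ∈ W} (ξ - w)) = ∑_{w ∈ W} min (μ ξ) (μ w)`. -/
theorem stmt_0 {Ω : Type*} [Field Ω] (μ : Ω → WithTop ℝ)
    (hμ0 : ∀ x : Ω, μ x = ⊤ ↔ x = 0)
    (hμmul : ∀ x y : Ω, μ (x * y) = μ x + μ y)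
    (hμadd : ∀ x y : Ω, min (μ x) (μ y) ≤ μ (x + y))
    (W : AddSubgroup Ω) (hWfin : (W : Set Ω).Finite)
    (ξ : Ω) (hmax : ∀ w ∈ W, μ (ξ + w) ≤ μ ξ) :
    (∀ w ∈ W, μ (ξ - w) = min (μ ξ) (μ w)) ∧
      μ (∏ w ∈ hWfin.toFinset, (ξ - w)) = ∑ w ∈ hWfin.toFinset, min (μ ξ) (μ w) := by
  classical
  -- μ 1 = 0
  have h1top : μ 1 ≠ ⊤ := by simp [hμ0]
  have h1 : μ (1 : Ω) = 0 := by
    have h := hμmul 1 1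
    rw [one_mul] at h
    have : (0 : WithTop ℝ) + μ 1 = μ 1 + μ 1 := by rw [zero_add]; exact h
    have := WithTop.add_right_cancel h1top this
    exact this.symm
  -- μ (-1) = 0
  have hneg1 : μ (-1 : Ω) = 0 := by
    have h := hμmul (-1) (-1)
    rw [neg_one_mul, neg_neg, h1] at h
    have hnt : μ (-1 : Ω) ≠ ⊤ := by simp [hμ0]
    obtain ⟨r, hr⟩ := WithTop.ne_top_iff_exists.mp hnt
    rw [← hr, ← WithTop.coe_add] at h
    have hr0 : r + r = 0 := by exact_mod_cast h.symm
    rw [← hr]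
    exact_mod_cast (show r = 0 by linarith)
  have hneg : ∀ x : Ω, μ (-x) = μ x := by
    intro x
    rw [show -x = (-1) * x by ring, hμmul, hneg1, zero_add]
  -- key pointwise claim
  have key : ∀ w ∈ W, μ (ξ - w) = min (μ ξ) (μ w) := by
    intro w hw
    have hle : μ (ξ - w) ≤ μ ξ := by
      have := hmax (-w) (neg_mem hw)
      rwa [← sub_eq_add_neg] at this
    have hge : min (μ ξ) (μ w) ≤ μ (ξ - w) := by
      have := hμadd ξ (-w)
      rwa [← sub_eq_add_neg, hneg] at this
    rcases le_or_gt (μ ξ) (μ w) with hc | hc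
    · rw [min_eq_left hc]
      exact le_antisymm hle (by rwa [min_eq_left hc] at hge)
    · rw [min_eq_right hc.le]
      rw [min_eq_right hc.le] at hge
      refine le_antisymm ?_ hge
      by_contra h
      push_neg at h
      have h2 := hμadd (-(ξ - w)) ξ
      rw [hneg] at h2
      have heq : -(ξ - w) + ξ = w := by ring
      rw [heq] at h2
      exact absurd (lt_of_lt_of_le (lt_min h hc) h2) (lt_irrefl _)
  refine ⟨key, ?_⟩
  -- product
  have prodmul : ∀ s : Finset Ω, ∀ f : Ω → Ω, μ (∏ w ∈ s, f w) = ∑ w ∈ s, μ (f w) := by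
    intro s f
    induction s using Finset.induction with
    | empty => simpa using h1
    | insert _ _ hx ih =>
      rw [Finset.prod_insert hx, Finset.sum_insert hx, hμmul, ih]
  rw [prodmul]
  exact Finset.sum_congr rfl fun w hw => key w (by simpa using hw)
end

section
/- Let Ω be a field with a valuation μ, fix an integer q ≥ 2 and an integer N ≥ 1, and let (W, (V^j)_{0≤j≤N}) be a filtered torsion group of level N in Ω. Let ξ ∈ Ω satisfy μ(ξ) ≥ μ(ξ + w) for every w ∈ W, and set S = Σ_{w ∈ W} min(μ(ξ), μ(w)). Then: (a) if μ(ξ) > 1/(q−1) then S = μ(ξ) + N; (b) if 1/(q^j(q−1)) < μ(ξ) ≤ 1/(q^{j−1}(q−1)) for some 1 ≤ j ≤ N, then S = q^j · μ(ξ) + N − j, so that N − j + 1/(q−1) < S ≤ N − j + 1 + 1/(q−1); (c) if μ(ξ) ≤ 1/(q^N(q−1)) then S = q^N · μ(ξ). In particular, if S > N + 1/(q−1) then μ(ξ) > 1/(q−1). -/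
/-!
Only the number of elements of `W` in each layer `V^j \ V^{j-1}` matters: there are
`q^j - q^{j-1}` of them, all of valuation `c_j = 1/(q^{j-1}(q-1))`, and `w = 0` contributes `μ ξ`.
Since `c_j` decreases and `(q^j - q^{j-1}) c_j = 1`, if `c_{k+1} ≤ μ ξ ≤ c_k` the layers `j ≤ k`
contribute `(q^k - 1) μ ξ` and each other layer contributes `1`, so `S = q^k μ ξ + N - k`.
The bounds come from `q^k c_{k+1} = 1/(q-1)` and `q^k c_k = 1 + 1/(q-1)`.
-/

open Finset

theorem Finset.sum_eq_sum_zero_add_sum_range_sdiff {α M : Type*} [AddCommMonoid M]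
    [DecidableEq α] {T : ℕ → Finset α} {n : ℕ} (hT : ∀ j < n, T j ⊆ T (j + 1)) (g : α → M) :
    ∑ w ∈ T n, g w = ∑ w ∈ T 0, g w + ∑ j ∈ range n, ∑ w ∈ T (j + 1) \ T j, g w := by
  induction n with
  | zero => simp
  | succ n ih =>
    rw [← sum_sdiff (hT n n.lt_succ_self), ih fun j hj => hT j (hj.trans n.lt_succ_self),
      sum_range_succ]
    abel

theorem Finset.sum_eq_add_sum_range_card_nsmul_of_layers {α M : Type*} [AddCommMonoid M]
    {F : Finset α} {V : ℕ → Set α} {a : α} {q N : ℕ} (hV0 : V 0 = {a}) (hVN : V N = F)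
    (hVmono : ∀ j < N, V j ⊆ V (j + 1)) (hVcard : ∀ j ≤ N, Nat.card (V j) = q ^ j)
    {g : α → M} {c : ℕ → M} (hg : ∀ j < N, ∀ w ∈ V (j + 1), w ∉ V j → g w = c (j + 1)) :
    ∑ w ∈ F, g w = g a + ∑ j ∈ range N, (q ^ (j + 1) - q ^ j) • c (j + 1) := by
  classical
  have hVle : ∀ j ≤ N, V j ⊆ F := fun j hj => hVN ▸
    monotoneOn_of_le_add_one Set.ordConnected_Iic (fun i _ _ hi => hVmono i hi)
      (Set.mem_Iic.2 hj) Set.self_mem_Iic hj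
  set T : ℕ → Finset α := fun j => F.filter (· ∈ V j)
  have hT : ∀ j ≤ N, (T j : Set α) = V j := fun j hj => by
    rw [coe_filter]; exact Set.sep_eq_of_subset (hVle j hj)
  have hTcard : ∀ j ≤ N, #(T j) = q ^ j := fun j hj => by
    rw [← Set.ncard_coe_finset, hT j hj, ← Nat.card_coe_set_eq, hVcard j hj]
  have hTmono : ∀ j < N, T j ⊆ T (j + 1) := fun j hj => by
    rw [← coe_subset, hT j hj.le, hT (j + 1) hj]
    exact hVmono j hj
  have hTF : T N = F := filter_true_of_mem fun x hx => hVN ▸ hx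
  have hT0 : T 0 = {a} := coe_injective (by rw [hT 0 N.zero_le, hV0, coe_singleton])
  rw [← hTF, sum_eq_sum_zero_add_sum_range_sdiff hTmono, hT0, sum_singleton]
  refine congrArg _ (sum_congr rfl fun j hj => ?_)
  have hjN := mem_range.1 hj
  rw [sum_congr rfl fun w hw => ?_, sum_const, card_sdiff_of_subset (hTmono j hjN),
    hTcard _ hjN, hTcard _ hjN.le]
  rw [mem_sdiff, ← mem_coe, ← mem_coe, hT _ hjN, hT _ hjN.le] at hw
  exact hg j hjN w hw.1 hw.2

theorem add_sum_range_nsmul_min_eq {M : Type*} [AddCommMonoid M] [LinearOrder M]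
    {q N k : ℕ} (hq : 1 ≤ q) (hk : k ≤ N) {x e : M} {c : ℕ → M}
    (hce : ∀ j < N, (q ^ (j + 1) - q ^ j) • c (j + 1) = e)
    (hlow : ∀ j < k, x ≤ c (j + 1)) (hhigh : ∀ j, k ≤ j → j < N → c (j + 1) ≤ x) :
    x + ∑ j ∈ range N, (q ^ (j + 1) - q ^ j) • min x (c (j + 1)) = q ^ k • x + (N - k) • e := by
  have hbelow : ∑ j ∈ range k, (q ^ (j + 1) - q ^ j) • min x (c (j + 1)) = (q ^ k - 1) • x := by
    rw [sum_congr rfl fun j hj => by rw [min_eq_left (hlow j (mem_range.1 hj))], sum_nsmul_assoc,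
      sum_range_tsub (pow_right_monotone hq), pow_zero]
  have habove : ∑ j ∈ Ico k N, (q ^ (j + 1) - q ^ j) • min x (c (j + 1)) = (N - k) • e := by
    rw [sum_congr rfl fun j hj => ?_, sum_const, Nat.card_Ico]
    obtain ⟨hkj, hjN⟩ := mem_Ico.1 hj
    rw [min_eq_right (hhigh j hkj hjN), hce j hjN]
  rw [← sum_range_add_sum_Ico _ hk, hbelow, habove, ← add_assoc, ← succ_nsmul',
    Nat.sub_add_cancel (Nat.one_le_pow _ _ hq)]

noncomputable def layerValuation (q j : ℕ) : ℝ := 1 / ((q : ℝ) ^ (j - 1) * ((q : ℝ) - 1))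

section layerValuation

variable {q : ℕ}

theorem layerValuation_one : layerValuation q 1 = 1 / ((q : ℝ) - 1) := by
  simp [layerValuation]

theorem layerValuation_antitone (hq : 1 < q) : Antitone (layerValuation q) := by
  have hq' : (1 : ℝ) < q := by exact_mod_cast hq
  intro i j hij
  unfold layerValuation
  gcongr
  linarith

theorem pow_mul_layerValuation_succ (hq : 1 < q) (j : ℕ) :
    (q : ℝ) ^ j * layerValuation q (j + 1) = 1 / ((q : ℝ) - 1) := by
  have hq' : (1 : ℝ) < q := by exact_mod_cast hq
  have : (q : ℝ) - 1 ≠ 0 := by linarith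
  simp only [layerValuation, Nat.add_sub_cancel]
  field_simp

theorem pow_mul_layerValuation (hq : 1 < q) {j : ℕ} (hj : 1 ≤ j) :
    (q : ℝ) ^ j * layerValuation q j = 1 + 1 / ((q : ℝ) - 1) := by
  obtain ⟨i, rfl⟩ := Nat.exists_eq_add_of_le' hj
  have hq' : (1 : ℝ) < q := by exact_mod_cast hq
  have : (q : ℝ) - 1 ≠ 0 := by linarith
  rw [pow_succ, mul_comm, ← mul_assoc, mul_comm _ ((q : ℝ) ^ i), pow_mul_layerValuation_succ hq]
  field_simp
  ring

theorem card_layer_mul_layerValuation (hq : 1 < q) (j : ℕ) :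
    ((q ^ (j + 1) - q ^ j : ℕ) : ℝ) * layerValuation q (j + 1) = 1 := by
  have hq' : (1 : ℝ) < q := by exact_mod_cast hq
  rw [Nat.cast_sub (Nat.pow_le_pow_right hq.le j.le_succ), Nat.cast_pow, Nat.cast_pow, pow_succ,
    ← mul_sub_one, mul_comm, ← mul_assoc, mul_comm _ ((q : ℝ) ^ j), pow_mul_layerValuation_succ hq]
  field_simp [show (q : ℝ) - 1 ≠ 0 by linarith]

end layerValuation

noncomputable def layerSum (q N : ℕ) (m : WithTop ℝ) : WithTop ℝ :=
  m + ∑ j ∈ range N, (q ^ (j + 1) - q ^ j) • min m (layerValuation q (j + 1) : WithTop ℝ)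

theorem layerSum_eq {q N k : ℕ} (hq : 1 < q) (hk : k ≤ N) {m : WithTop ℝ}
    (hlow : k ≠ 0 → m ≤ layerValuation q k) (hhigh : k < N → layerValuation q (k + 1) ≤ m) :
    layerSum q N m = q ^ k • m + ((N - k : ℝ) : WithTop ℝ) := by
  have hanti := layerValuation_antitone hq
  have hone : ∀ j, (q ^ (j + 1) - q ^ j) • (layerValuation q (j + 1) : WithTop ℝ) = 1 := by
    intro j
    rw [← WithTop.coe_nsmul, nsmul_eq_mul, card_layer_mul_layerValuation hq, WithTop.coe_one]
  rw [layerSum, add_sum_range_nsmul_min_eq (c := fun j => (layerValuation q j : WithTop ℝ))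
    hq.le hk (fun j _ => hone j)
    (fun j hj => (hlow (by omega)).trans (WithTop.coe_le_coe.2 (hanti (by omega))))
    (fun j hkj hjN => (WithTop.coe_le_coe.2 (hanti (by omega))).trans (hhigh (by omega)))]
  rw [nsmul_one, ← Nat.cast_sub hk]
  rfl

theorem exists_mem_Ioc_succ_of_mem_Ioc {α : Type*} [LinearOrder α] {c : ℕ → α} {m : α} :
    ∀ {N : ℕ}, m ∈ Set.Ioc (c (N + 1)) (c 1) → ∃ j, 1 ≤ j ∧ j ≤ N ∧ m ∈ Set.Ioc (c (j + 1)) (c j)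
  | 0, h => absurd h.2 (not_le.2 h.1)
  | N + 1, h => by
    by_cases hN : c (N + 1) < m
    · obtain ⟨j, hj1, hjN, hj⟩ := exists_mem_Ioc_succ_of_mem_Ioc ⟨hN, h.2⟩
      exact ⟨j, hj1, hjN.trans N.le_succ, hj⟩
    · exact ⟨N + 1, N.succ_pos, le_rfl, h.1, not_lt.1 hN⟩

section layerSum

variable {q N : ℕ} {m : WithTop ℝ}

theorem layerSum_of_one_div_sub_one_lt (hq : 1 < q) (h : ((1 / (q - 1) : ℝ) : WithTop ℝ) < m) :
    layerSum q N m = m + (N : ℝ) := by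
  rw [← layerValuation_one] at h
  simpa using layerSum_eq hq N.zero_le (k := 0) (m := m) (by simp) fun _ => h.le

theorem layerSum_of_le_layerValuation_succ (hq : 1 < q) (h : m ≤ layerValuation q (N + 1)) :
    layerSum q N m = q ^ N • m := by
  have hN : m ≤ layerValuation q N :=
    h.trans (WithTop.coe_le_coe.2 (layerValuation_antitone hq N.le_succ))
  simpa using layerSum_eq hq le_rfl (fun _ => hN) (by simp)

theorem layerSum_eq_and_bounds (hq : 1 < q) {j : ℕ} (hj : 1 ≤ j) (hjN : j ≤ N)
    (hlt : layerValuation q (j + 1) < m) (hle : m ≤ layerValuation q j) :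
    layerSum q N m = q ^ j • m + ((N - j : ℝ) : WithTop ℝ) ∧
      ((N - j + 1 / (q - 1) : ℝ) : WithTop ℝ) < layerSum q N m ∧
      layerSum q N m ≤ ((N - j + 1 + 1 / (q - 1) : ℝ) : WithTop ℝ) := by
  have hS := layerSum_eq hq hjN (fun _ => hle) fun _ => hlt.le
  refine ⟨hS, ?_⟩
  lift m to ℝ using ne_top_of_le_ne_top WithTop.coe_ne_top hle
  rw [WithTop.coe_lt_coe] at hlt
  rw [WithTop.coe_le_coe] at hle
  have hqj : (0 : ℝ) < (q : ℝ) ^ j := pow_pos (Nat.cast_pos.2 (Nat.zero_lt_of_lt hq)) j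
  have hlower := mul_lt_mul_of_pos_left hlt hqj
  have hupper := mul_le_mul_of_nonneg_left hle hqj.le
  rw [pow_mul_layerValuation_succ hq] at hlower
  rw [pow_mul_layerValuation hq hj] at hupper
  rw [hS, ← WithTop.coe_nsmul, ← WithTop.coe_add, WithTop.coe_lt_coe, WithTop.coe_le_coe,
    nsmul_eq_mul, Nat.cast_pow]
  constructor <;> linarith

theorem one_div_sub_one_lt_of_lt_layerSum (hq : 1 < q)
    (h : ((N + 1 / (q - 1) : ℝ) : WithTop ℝ) < layerSum q N m) :
    ((1 / (q - 1) : ℝ) : WithTop ℝ) < m := by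
  by_contra! h1
  rw [← layerValuation_one] at h1
  by_cases hN : m ≤ layerValuation q (N + 1)
  · rw [layerSum_of_le_layerValuation_succ hq hN] at h
    lift m to ℝ using ne_top_of_le_ne_top WithTop.coe_ne_top hN
    rw [WithTop.coe_le_coe] at hN
    have hqN : (0 : ℝ) ≤ (q : ℝ) ^ N := by positivity
    have := mul_le_mul_of_nonneg_left hN hqN
    rw [pow_mul_layerValuation_succ hq] at this
    rw [← WithTop.coe_nsmul, WithTop.coe_lt_coe, nsmul_eq_mul, Nat.cast_pow] at h
    linarith [(N.cast_nonneg : (0 : ℝ) ≤ N)]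
  · obtain ⟨j, hj1, hjN, hlt, hle⟩ := exists_mem_Ioc_succ_of_mem_Ioc
      (c := fun i => (layerValuation q i : WithTop ℝ)) ⟨not_le.1 hN, h1⟩
    have hupper := (layerSum_eq_and_bounds hq hj1 hjN hlt hle).2.2
    have hj : (1 : ℝ) ≤ j := by exact_mod_cast hj1
    exact absurd (h.trans_le hupper) (not_lt.2 (WithTop.coe_le_coe.2 (by linarith)))

end layerSum

theorem stmt_1_general {Ω : Type*} [Field Ω] (μ : Ω → WithTop ℝ)
    (hμ0 : ∀ x : Ω, μ x = ⊤ ↔ x = 0)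
    (q N : ℕ) (hq : 2 ≤ q)
    (W : AddSubgroup Ω) (hWfin : (W : Set Ω).Finite)
    (V : ℕ → AddSubgroup Ω)
    (hV0 : V 0 = ⊥) (hVN : V N = W)
    (hVmono : ∀ j < N, V j ≤ V (j + 1))
    (hVcard : ∀ j ≤ N, Nat.card (V j) = q ^ j)
    (hVval : ∀ j, 1 ≤ j → j ≤ N → ∀ w ∈ V j, w ∉ V (j - 1) →
      μ w = ((1 / ((q : ℝ) ^ (j - 1) * ((q : ℝ) - 1)) : ℝ) : WithTop ℝ))
    (ξ : Ω)
    (S : WithTop ℝ) (hS : S = ∑ w ∈ hWfin.toFinset, min (μ ξ) (μ w)) :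
    -- (a)
    (((1 / ((q : ℝ) - 1) : ℝ) : WithTop ℝ) < μ ξ →
        S = μ ξ + ((N : ℝ) : WithTop ℝ)) ∧
    -- (b)
    (∀ j, 1 ≤ j → j ≤ N →
      ((1 / ((q : ℝ) ^ j * ((q : ℝ) - 1)) : ℝ) : WithTop ℝ) < μ ξ →
      μ ξ ≤ ((1 / ((q : ℝ) ^ (j - 1) * ((q : ℝ) - 1)) : ℝ) : WithTop ℝ) →
        S = (q ^ j) • μ ξ + (((N : ℝ) - (j : ℝ) : ℝ) : WithTop ℝ) ∧
        (((N : ℝ) - (j : ℝ) + 1 / ((q : ℝ) - 1) : ℝ) : WithTop ℝ) < S ∧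
        S ≤ (((N : ℝ) - (j : ℝ) + 1 + 1 / ((q : ℝ) - 1) : ℝ) : WithTop ℝ)) ∧
    -- (c)
    (μ ξ ≤ ((1 / ((q : ℝ) ^ N * ((q : ℝ) - 1)) : ℝ) : WithTop ℝ) →
        S = (q ^ N) • μ ξ) ∧
    -- in particular
    ((((N : ℝ) + 1 / ((q : ℝ) - 1) : ℝ) : WithTop ℝ) < S →
      ((1 / ((q : ℝ) - 1) : ℝ) : WithTop ℝ) < μ ξ) := by
  have hlayers : S = layerSum q N (μ ξ) := by
    rw [hS, sum_eq_add_sum_range_card_nsmul_of_layers (V := fun j => (V j : Set Ω)) (a := 0)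
      (c := fun j => min (μ ξ) (layerValuation q j)) (by simp [hV0]) (by simp [hVN]) hVmono hVcard
      (fun j hj w hw hw' => congrArg (min (μ ξ)) (hVval (j + 1) j.succ_pos hj w hw hw')),
      (hμ0 0).2 rfl, min_top_right]
    rfl
  subst hlayers
  exact ⟨layerSum_of_one_div_sub_one_lt hq, fun j hj hjN => layerSum_eq_and_bounds hq hj hjN,
    layerSum_of_le_layerValuation_succ hq, one_div_sub_one_lt_of_lt_layerSum hq⟩

/-- Let `Ω` be a field with a valuation `μ`, `q ≥ 2`, `N ≥ 1`, and let
`(W, (V j)_{0 ≤ j ≤ N})` be a filtered torsion group of level `N` in `Ω`: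
`W` is a finite subgroup of `(Ω,+)`, `V 0 = ⊥ ⊆ V 1 ⊆ ⋯ ⊆ V N = W`, `|V j| = q ^ j`, and
`μ w = 1 / (q^(j-1)(q-1))` for `w ∈ V j \ V (j-1)`. Let `ξ` satisfy `μ ξ ≥ μ (ξ + w)` for
all `w ∈ W` and set `S = ∑_{w ∈ W} min (μ ξ) (μ w)`. Then:
(a) if `μ ξ > 1/(q-1)` then `S = μ ξ + N`;
(b) if `1/(q^j (q-1)) < μ ξ ≤ 1/(q^(j-1) (q-1))` for some `1 ≤ j ≤ N` then
    `S = q^j • μ ξ + (N - j)`, so that `N - j + 1/(q-1) < S ≤ N - j + 1 + 1/(q-1)`;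
(c) if `μ ξ ≤ 1/(q^N (q-1))` then `S = q^N • μ ξ`.
In particular, if `S > N + 1/(q-1)` then `μ ξ > 1/(q-1)`. -/
theorem stmt_1 {Ω : Type*} [Field Ω] (μ : Ω → WithTop ℝ)
    (hμ0 : ∀ x : Ω, μ x = ⊤ ↔ x = 0)
    (hμmul : ∀ x y : Ω, μ (x * y) = μ x + μ y)
    (hμadd : ∀ x y : Ω, min (μ x) (μ y) ≤ μ (x + y))
    (q N : ℕ) (hq : 2 ≤ q) (hN : 1 ≤ N)
    (W : AddSubgroup Ω) (hWfin : (W : Set Ω).Finite)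
    (V : ℕ → AddSubgroup Ω)
    (hV0 : V 0 = ⊥) (hVN : V N = W)
    (hVmono : ∀ j < N, V j ≤ V (j + 1))
    (hVcard : ∀ j ≤ N, Nat.card (V j) = q ^ j)
    (hVval : ∀ j, 1 ≤ j → j ≤ N → ∀ w ∈ V j, w ∉ V (j - 1) →
      μ w = ((1 / ((q : ℝ) ^ (j - 1) * ((q : ℝ) - 1)) : ℝ) : WithTop ℝ))
    (ξ : Ω) (hmax : ∀ w ∈ W, μ (ξ + w) ≤ μ ξ)
    (S : WithTop ℝ) (hS : S = ∑ w ∈ hWfin.toFinset, min (μ ξ) (μ w)) :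
    -- (a)
    (((1 / ((q : ℝ) - 1) : ℝ) : WithTop ℝ) < μ ξ →
        S = μ ξ + ((N : ℝ) : WithTop ℝ)) ∧
    -- (b)
    (∀ j, 1 ≤ j → j ≤ N →
      ((1 / ((q : ℝ) ^ j * ((q : ℝ) - 1)) : ℝ) : WithTop ℝ) < μ ξ →
      μ ξ ≤ ((1 / ((q : ℝ) ^ (j - 1) * ((q : ℝ) - 1)) : ℝ) : WithTop ℝ) →
        S = (q ^ j) • μ ξ + (((N : ℝ) - (j : ℝ) : ℝ) : WithTop ℝ) ∧
        (((N : ℝ) - (j : ℝ) + 1 / ((q : ℝ) - 1) : ℝ) : WithTop ℝ) < S ∧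
        S ≤ (((N : ℝ) - (j : ℝ) + 1 + 1 / ((q : ℝ) - 1) : ℝ) : WithTop ℝ)) ∧
    -- (c)
    (μ ξ ≤ ((1 / ((q : ℝ) ^ N * ((q : ℝ) - 1)) : ℝ) : WithTop ℝ) →
        S = (q ^ N) • μ ξ) ∧
    -- in particular
    ((((N : ℝ) + 1 / ((q : ℝ) - 1) : ℝ) : WithTop ℝ) < S →
      ((1 / ((q : ℝ) - 1) : ℝ) : WithTop ℝ) < μ ξ) :=
  stmt_1_general μ hμ0 q N hq W hWfin V hV0 hVN hVmono hVcard hVval ξ S hS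
end

section
/- Let Ω be a field with a valuation μ, fix an integer q ≥ 2 and an integer N ≥ 1, and let (W, (V^j)_{0≤j≤N}) be a filtered torsion group of level N in Ω. Then Σ_{w ∈ W, w ≠ 0} μ(w) = N, and for every v ∈ V^N \ V^{N−1} one has Σ_{w ∈ V^N \ V^{N−1}, w ≠ v} μ(v − w) = N − 1/(q−1). Equivalently, if h(X) = ∏_{w ∈ V^N \ V^{N−1}} (X − w), then μ(h'(v)) = N − 1/(q−1). -/
private lemma stmt2_nsmul_coe (n : ℕ) (r : ℝ) :
    (n • ((r : WithTop ℝ))) = (((n : ℝ) * r : ℝ) : WithTop ℝ) := by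
  induction n with
  | zero => simp
  | succ k ih =>
    rw [succ_nsmul, ih, ← WithTop.coe_add, WithTop.coe_eq_coe]
    push_cast
    ring

open Polynomial Classical in

/-- Let `Ω` be a field with a valuation `μ`, `q ≥ 2`, `N ≥ 1`, and let
`(W, (V j)_{0 ≤ j ≤ N})` be a filtered torsion group of level `N` in `Ω` (see below).
Then `∑_{w ∈ W, w ≠ 0} μ w = N`, and for every `v ∈ V N \ V (N-1)` one has
`∑_{w ∈ V N \ V (N-1), w ≠ v} μ (v - w) = N - 1/(q-1)`; equivalently, if
`h X = ∏_{w ∈ V N \ V (N-1)} (X - w)` then `μ (h' v) = N - 1/(q-1)`. -/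
theorem stmt_2 {Ω : Type*} [Field Ω] (μ : Ω → WithTop ℝ)
    (hμ0 : ∀ x : Ω, μ x = ⊤ ↔ x = 0)
    (hμmul : ∀ x y : Ω, μ (x * y) = μ x + μ y)
    (hμadd : ∀ x y : Ω, min (μ x) (μ y) ≤ μ (x + y))
    (q N : ℕ) (hq : 2 ≤ q) (hN : 1 ≤ N)
    (W : AddSubgroup Ω) (hWfin : (W : Set Ω).Finite)
    (V : ℕ → AddSubgroup Ω)
    (hV0 : V 0 = ⊥) (hVN : V N = W)
    (hVmono : ∀ j < N, V j ≤ V (j + 1))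
    (hVcard : ∀ j ≤ N, Nat.card (V j) = q ^ j)
    (hVval : ∀ j, 1 ≤ j → j ≤ N → ∀ w ∈ V j, w ∉ V (j - 1) →
      μ w = ((1 / ((q : ℝ) ^ (j - 1) * ((q : ℝ) - 1)) : ℝ) : WithTop ℝ)) :
    (∑ w ∈ hWfin.toFinset.erase 0, μ w = ((N : ℝ) : WithTop ℝ)) ∧
    (∀ v ∈ V N, v ∉ V (N - 1) →
      (∑ w ∈ (hWfin.toFinset.filter (fun w => w ∉ V (N - 1))).erase v, μ (v - w)
          = (((N : ℝ) - 1 / ((q : ℝ) - 1) : ℝ) : WithTop ℝ)) ∧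
      μ (Polynomial.eval v (Polynomial.derivative
            (∏ w ∈ hWfin.toFinset.filter (fun w => w ∉ V (N - 1)), (X - C w))))
        = (((N : ℝ) - 1 / ((q : ℝ) - 1) : ℝ) : WithTop ℝ)) := by
  have hqR : (2 : ℝ) ≤ (q : ℝ) := by exact_mod_cast hq
  have hq1 : (1 : ℝ) < (q : ℝ) := by linarith
  -- chain of inclusions
  have hchain : ∀ i j, i ≤ j → j ≤ N → V i ≤ V j := by
    intro i j hij hjN
    induction j with
    | zero => simp [Nat.le_zero.mp hij]
    | succ k ih =>
      rcases Nat.lt_or_ge i (k + 1) with h | h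
      · exact le_trans (ih (Nat.lt_succ_iff.mp h) (by omega)) (hVmono k (by omega))
      · have : i = k + 1 := by omega
        simp [this]
  have hVsub : ∀ j, j ≤ N → (V j : Set Ω) ⊆ (W : Set Ω) := by
    intro j hj
    have := hchain j N hj le_rfl
    rw [← hVN]; exact this
  -- the finsets of the subgroups
  set F : ℕ → Finset Ω := fun j => hWfin.toFinset.filter (fun x => x ∈ V j) with hF
  have hmemF : ∀ j, j ≤ N → ∀ x : Ω, (x ∈ F j ↔ x ∈ V j) := by
    intro j hj x
    simp only [hF, Finset.mem_filter, Set.Finite.mem_toFinset]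
    exact ⟨fun h => h.2, fun h => ⟨hVsub j hj h, h⟩⟩
  have hcardF : ∀ j, j ≤ N → (F j).card = q ^ j := by
    intro j hj
    have hfin : ((V j : Set Ω)).Finite := hWfin.subset (hVsub j hj)
    have e : hfin.toFinset = F j := by
      ext x
      rw [Set.Finite.mem_toFinset, hmemF j hj x]
      rfl
    have h1 : Nat.card (V j) = (V j : Set Ω).ncard := by
      rw [← Nat.card_coe_set_eq]
      rfl
    rw [← e, ← Set.ncard_eq_toFinset_card _ hfin, ← h1, hVcard j hj]
  -- μ 1 = 0 and multiplicativity on products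
  have hμ1 : μ 1 = 0 := by
    have h := hμmul 1 1
    rw [one_mul] at h
    have hne : μ 1 ≠ ⊤ := by simp [hμ0]
    lift μ 1 to ℝ using hne with r hr
    rw [← WithTop.coe_add, WithTop.coe_eq_coe] at h
    have : r = 0 := by linarith
    exact_mod_cast this
  have hμprod : ∀ (s : Finset Ω) (f : Ω → Ω),
      μ (∏ w ∈ s, f w) = ∑ w ∈ s, μ (f w) := by
    intro s f
    induction s using Finset.cons_induction with
    | empty => simpa using hμ1
    | cons a s ha ih =>
      rw [Finset.prod_cons, Finset.sum_cons, hμmul, ih]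
  -- Part 1 for every level
  have part1 : ∀ n, n ≤ N → ∑ w ∈ (F n).erase 0, μ w = ((n : ℝ) : WithTop ℝ) := by
    intro n
    induction n with
    | zero =>
      intro _
      have : (F 0).erase 0 = ∅ := by
        apply Finset.eq_empty_iff_forall_notMem.mpr
        intro x hx
        rcases Finset.mem_erase.mp hx with ⟨hx0, hxF⟩
        have : x ∈ V 0 := (hmemF 0 (by omega) x).mp hxF
        rw [hV0] at this
        exact hx0 (by simpa using this)
      simp [this]
    | succ n ih =>
      intro h
      have hnN : n ≤ N := by omega
      have hsub : (F n).erase 0 ⊆ (F (n + 1)).erase 0 := by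
        intro x hx
        rcases Finset.mem_erase.mp hx with ⟨hx0, hxF⟩
        exact Finset.mem_erase.mpr ⟨hx0,
          (hmemF (n+1) h x).mpr (hVmono n (by omega) ((hmemF n hnN x).mp hxF))⟩
      have hd : (F (n + 1)).erase 0 \ (F n).erase 0 = F (n + 1) \ F n := by
        ext x
        simp only [Finset.mem_sdiff, Finset.mem_erase]
        constructor
        · rintro ⟨⟨hx0, hx1⟩, hx2⟩
          refine ⟨hx1, fun hxn => hx2 ⟨hx0, hxn⟩⟩
        · rintro ⟨hx1, hx2⟩
          have hx0 : x ≠ 0 := by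
            intro h0
            exact hx2 ((hmemF n hnN x).mpr (h0 ▸ (V n).zero_mem))
          exact ⟨⟨hx0, hx1⟩, fun h' => hx2 h'.2⟩
      have hlayer : ∑ w ∈ F (n + 1) \ F n, μ w
          = (((F (n + 1) \ F n).card : ℝ) * (1 / ((q : ℝ) ^ n * ((q : ℝ) - 1))) : ℝ) := by
        have hconst : ∀ w ∈ F (n + 1) \ F n,
            μ w = ((1 / ((q : ℝ) ^ n * ((q : ℝ) - 1)) : ℝ) : WithTop ℝ) := by
          intro w hw
          rcases Finset.mem_sdiff.mp hw with ⟨hw1, hw2⟩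
          have := hVval (n + 1) (by omega) h w ((hmemF (n+1) h w).mp hw1)
            (by simpa using fun hwn => hw2 ((hmemF n hnN w).mpr hwn))
          simpa using this
        rw [Finset.sum_congr rfl hconst, Finset.sum_const, stmt2_nsmul_coe]
      have hcard : ((F (n + 1) \ F n).card : ℝ) = (q : ℝ) ^ (n + 1) - (q : ℝ) ^ n := by
        have hFsub : F n ⊆ F (n + 1) := by
          intro x hx
          exact (hmemF (n+1) h x).mpr (hVmono n (by omega) ((hmemF n hnN x).mp hx))
        have := Finset.card_sdiff_add_card_eq_card hFsub
        rw [hcardF n hnN, hcardF (n+1) h] at this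
        have : ((F (n + 1) \ F n).card : ℝ) + (q : ℝ) ^ n = (q : ℝ) ^ (n + 1) := by
          exact_mod_cast congrArg (Nat.cast : ℕ → ℝ) this
        linarith
      rw [← Finset.sum_sdiff hsub, ih hnN, hd, hlayer, hcard, ← WithTop.coe_add,
        WithTop.coe_eq_coe]
      have hqn : (q : ℝ) ^ n ≠ 0 := by positivity
      have hq1' : (q : ℝ) - 1 ≠ 0 := by linarith
      push_cast
      field_simp
      ring
  have hFN : F N = hWfin.toFinset := by
    ext x
    rw [hmemF N le_rfl x, hVN]
    exact (Set.Finite.mem_toFinset hWfin).symm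
  constructor
  · rw [← hFN]
    exact part1 N le_rfl
  · intro v hv hv'
    set M := N - 1 with hM
    have hMN : M ≤ N := by omega
    have hNM : N = M + 1 := by omega
    have hq1' : (q : ℝ) - 1 ≠ 0 := by linarith
    set S : Finset Ω := hWfin.toFinset.filter (fun w => w ∉ V (N - 1)) with hS
    have hmemS : ∀ x : Ω, x ∈ S ↔ (x ∈ V N ∧ x ∉ V M) := by
      intro x
      simp only [hS, Finset.mem_filter, Set.Finite.mem_toFinset, ← hM]
      constructor
      · rintro ⟨h1, h2⟩
        exact ⟨by rw [hVN]; exact h1, h2⟩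
      · rintro ⟨h1, h2⟩
        exact ⟨by rw [← hVN]; exact h1, h2⟩
    have hvS : v ∈ S := (hmemS v).mpr ⟨hv, hv'⟩
    -- the target finset for reindexing
    set B : Finset Ω := S.filter (fun u => v - u ∉ V M) with hB
    set T : Finset Ω := (F M).erase 0 ∪ B with hT
    have hdisj : Disjoint ((F M).erase 0) B := by
      rw [Finset.disjoint_left]
      intro x hx hxB
      rcases Finset.mem_erase.mp hx with ⟨_, hxF⟩
      exact (((hmemS x).mp (Finset.mem_filter.mp hxB).1).2) ((hmemF M hMN x).mp hxF)
    have hreindex : ∑ w ∈ S.erase v, μ (v - w) = ∑ u ∈ T, μ u := by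
      apply Finset.sum_nbij' (i := fun w => v - w) (j := fun u => v - u)
      · intro w hw
        rcases Finset.mem_erase.mp hw with ⟨hwv, hwS⟩
        rcases (hmemS w).mp hwS with ⟨hwN, hwM⟩
        by_cases hvw : v - w ∈ V M
        · exact Finset.mem_union_left _ (Finset.mem_erase.mpr
            ⟨sub_ne_zero.mpr (Ne.symm hwv), (hmemF M hMN _).mpr hvw⟩)
        · refine Finset.mem_union_right _ (Finset.mem_filter.mpr ⟨?_, ?_⟩)
          · exact (hmemS _).mpr ⟨sub_mem hv hwN, hvw⟩
          · simpa [sub_sub_cancel] using hwM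
      · intro u hu
        rcases Finset.mem_union.mp hu with h | h
        · rcases Finset.mem_erase.mp h with ⟨hu0, huF⟩
          have huM : u ∈ V M := (hmemF M hMN u).mp huF
          have huN : u ∈ V N := hchain M N hMN le_rfl huM
          refine Finset.mem_erase.mpr ⟨?_, (hmemS _).mpr ⟨sub_mem hv huN, ?_⟩⟩
          · intro h'
            exact hu0 (by simpa using sub_eq_self.mp h')
          · intro h'
            exact hv' (by simpa using add_mem h' huM)
        · rcases Finset.mem_filter.mp h with ⟨huS, hvu⟩
          rcases (hmemS u).mp huS with ⟨huN, huM⟩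
          refine Finset.mem_erase.mpr ⟨?_, (hmemS _).mpr ⟨sub_mem hv huN, hvu⟩⟩
          intro h'
          exact huM (by simpa [sub_eq_self.mp h'] using (V M).zero_mem)
      · intro w _; exact sub_sub_cancel v w
      · intro u _; exact sub_sub_cancel v u
      · intro w _; rfl
    -- cardinality of B
    have hcardS : S.card + q ^ M = q ^ N := by
      have hSeq : S = F N \ F M := by
        ext x
        rw [Finset.mem_sdiff, hmemS x, hmemF N le_rfl x, hmemF M hMN x]
      have hFsub : F M ⊆ F N := by
        intro x hx
        exact (hmemF N le_rfl x).mpr (hchain M N hMN le_rfl ((hmemF M hMN x).mp hx))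
      have := Finset.card_sdiff_add_card_eq_card hFsub
      rw [hcardF M hMN, hcardF N le_rfl] at this
      rw [hSeq]; exact this
    have hcardfil : (S.filter (fun u => v - u ∈ V M)).card = q ^ M := by
      rw [← hcardF M hMN]
      refine (Finset.card_nbij (i := fun t => v - t) ?_ ?_ ?_).symm
      · intro t ht
        have htM : t ∈ V M := (hmemF M hMN t).mp ht
        refine Finset.mem_filter.mpr ⟨(hmemS _).mpr ⟨sub_mem hv (hchain M N hMN le_rfl htM), ?_⟩, ?_⟩
        · intro h'
          exact hv' (by simpa using add_mem h' htM)
        · simpa [sub_sub_cancel] using htM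
      · intro a _ b _ hab
        exact sub_right_injective hab
      · intro u hu
        rcases Finset.mem_filter.mp (Finset.mem_coe.mp hu) with ⟨huS, hvu⟩
        exact ⟨v - u, Finset.mem_coe.mpr ((hmemF M hMN _).mpr hvu), sub_sub_cancel v u⟩
    have hcardB : (B.card : ℝ) = (q : ℝ) ^ N - 2 * (q : ℝ) ^ M := by
      have hBsd : B = S \ (S.filter (fun u => v - u ∈ V M)) := by
        ext x
        simp only [hB, Finset.mem_sdiff, Finset.mem_filter]
        tauto
      have hsub : (S.filter (fun u => v - u ∈ V M)) ⊆ S := Finset.filter_subset _ _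
      have h1 := Finset.card_sdiff_add_card_eq_card hsub
      rw [hcardfil] at h1
      have h2 : B.card + q ^ M + q ^ M = q ^ N := by
        rw [hBsd]
        omega
      have h3 := congrArg (Nat.cast : ℕ → ℝ) h2
      push_cast at h3
      linarith
    -- sum over B
    have hsumB : ∑ u ∈ B, μ u
        = ((((q : ℝ) ^ N - 2 * (q : ℝ) ^ M) * (1 / ((q : ℝ) ^ M * ((q : ℝ) - 1))) : ℝ)
            : WithTop ℝ) := by
      have hconst : ∀ u ∈ B, μ u = ((1 / ((q : ℝ) ^ M * ((q : ℝ) - 1)) : ℝ) : WithTop ℝ) := by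
        intro u hu
        rcases Finset.mem_filter.mp hu with ⟨huS, _⟩
        rcases (hmemS u).mp huS with ⟨huN, huM⟩
        have := hVval N hN le_rfl u huN (by rw [← hM]; exact huM)
        rw [this, hM]
      rw [Finset.sum_congr rfl hconst, Finset.sum_const, stmt2_nsmul_coe,
        WithTop.coe_eq_coe, hcardB]
    have hmain : ∑ w ∈ S.erase v, μ (v - w)
        = (((N : ℝ) - 1 / ((q : ℝ) - 1) : ℝ) : WithTop ℝ) := by
      rw [hreindex, hT, Finset.sum_union hdisj, part1 M hMN, hsumB, ← WithTop.coe_add,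
        WithTop.coe_eq_coe]
      have hqM : (q : ℝ) ^ M ≠ 0 := by positivity
      rw [hNM]
      push_cast
      rw [pow_succ]
      field_simp
      ring
    refine ⟨hmain, ?_⟩
    -- the derivative formulation
    have hevald : eval v (derivative (∏ w ∈ S, (X - C w)))
        = ∏ w ∈ S.erase v, (v - w) := by
      rw [← Finset.mul_prod_erase S _ hvS, derivative_mul]
      simp [eval_prod]
    rw [hevald, hμprod]
    exact hmain
end

section
/- Let L be a field with a valuation μ, let 𝔪 = {x ∈ L : μ(x) > 0}, let A be an (additively written) abelian group, and let f : 𝔪 × L^× → A be a map satisfying: (1) f(x + y, β) = f(x, β) + f(y, β) for all x, y ∈ 𝔪 and β ∈ L^×; (2) f(x, βγ) = f(x, β) + f(x, γ) for all x ∈ 𝔪 and β, γ ∈ L^×; (3) f(x, x) = 0 for every x ∈ 𝔪 with x ≠ 0; (4) there exists a real number N such that f(α, β) = 0 whenever μ(α) > N, for all β ∈ L^×. Then for every b ∈ 𝔪 with b ≠ 0 and every c ∈ 𝔪, one has f(c, 1 − b) = f(bc/(1 − b), b^{−1}). -/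
/-- Let `L` be a field with a valuation `μ`, `𝔪 = {x : 0 < μ x}` its maximal
ideal, `A` an abelian group, and `f : 𝔪 × L^× → A` a map which is additive in the first
variable, multiplicative-to-additive in the second variable, satisfies `f x x = 0` for all
nonzero `x ∈ 𝔪`, and vanishes in the first variable once the valuation is large enough. Then
for every `b ∈ 𝔪 \ {0}` and `c ∈ 𝔪` one has `f c (1 - b) = f (b c / (1 - b)) b⁻¹`. -/
theorem stmt_3 {L : Type*} [Field L] {A : Type*} [AddCommGroup A]
    (μ : L → WithTop ℝ)
    (hμ0 : ∀ x : L, μ x = ⊤ ↔ x = 0)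
    (hμmul : ∀ x y : L, μ (x * y) = μ x + μ y)
    (hμadd : ∀ x y : L, min (μ x) (μ y) ≤ μ (x + y))
    (f : L → L → A)
    (hf1 : ∀ x y : L, 0 < μ x → 0 < μ y → ∀ β : L, β ≠ 0 →
      f (x + y) β = f x β + f y β)
    (hf2 : ∀ x : L, 0 < μ x → ∀ β γ : L, β ≠ 0 → γ ≠ 0 →
      f x (β * γ) = f x β + f x γ)
    (hdiag : ∀ x : L, 0 < μ x → x ≠ 0 → f x x = 0)
    (hvanish : ∃ Nv : ℝ, ∀ α β : L, ((Nv : ℝ) : WithTop ℝ) < μ α → β ≠ 0 → f α β = 0) :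
    ∀ b c : L, b ≠ 0 → 0 < μ b → 0 < μ c →
      f c (1 - b) = f (b * c / (1 - b)) b⁻¹ := by
  intro b c hb hμb hμc
  -- μ 1 = 0
  have h1ne : μ 1 ≠ ⊤ := by simp [hμ0]
  have hμ1 : μ 1 = 0 := by
    have h := hμmul 1 1
    rw [one_mul] at h
    lift μ 1 to ℝ using h1ne with r hr
    have hr2 : r = r + r := by exact_mod_cast h
    have : r = 0 := by linarith
    exact_mod_cast this
  -- μ (-1) = 0
  have hμneg1 : μ (-1) = 0 := by
    have hn : μ (-1) ≠ ⊤ := by simp [hμ0]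
    have h := hμmul (-1) (-1)
    rw [neg_mul_neg, one_mul, hμ1] at h
    lift μ (-1) to ℝ using hn with r hr
    have hr2 : (0 : ℝ) = r + r := by exact_mod_cast h
    have : r = 0 := by linarith
    exact_mod_cast this
  have hμneg : ∀ x : L, μ (-x) = μ x := by
    intro x
    have h := hμmul (-1) x
    rw [neg_one_mul, hμneg1, zero_add] at h
    exact h
  set e := 1 - b with he_def
  -- μ e = 0
  have hμe : μ e = 0 := by
    have h1 : (0 : WithTop ℝ) ≤ μ e := by
      have h := hμadd 1 (-b)
      rw [hμneg] at h
      have h' : min (μ 1) (μ b) ≤ μ e := by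
        simpa [he_def, sub_eq_add_neg] using h
      calc (0 : WithTop ℝ) = min (μ 1) (μ b) := by
            rw [hμ1, min_eq_left hμb.le]
        _ ≤ μ e := h'
    have h2 : μ e ≤ 0 := by
      have h := hμadd e b
      have heb : e + b = 1 := by ring
      rw [heb, hμ1] at h
      by_contra hlt
      push_neg at hlt
      have : (0 : WithTop ℝ) < min (μ e) (μ b) := lt_min hlt hμb
      exact absurd (lt_of_lt_of_le this h) (lt_irrefl 0)
    exact le_antisymm h2 h1
  have he : e ≠ 0 := fun h => by simp [h, (hμ0 (0:L)).mpr rfl] at hμe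
  have hμdiv : ∀ x : L, μ (x / e) = μ x := by
    intro x
    have h := hμmul (x / e) e
    rw [div_mul_cancel₀ x he, hμe, add_zero] at h
    exact h.symm
  -- f x 1 = 0
  have hf_one : ∀ x : L, 0 < μ x → f x 1 = 0 := by
    intro x hx
    have h := hf2 x hx 1 1 one_ne_zero one_ne_zero
    rw [mul_one] at h
    exact left_eq_add.mp h
  -- f x β⁻¹ = - f x β
  have hf_inv : ∀ x β : L, 0 < μ x → β ≠ 0 → f x β⁻¹ = - f x β := by
    intro x β hx hβ
    have h := hf2 x hx β β⁻¹ hβ (inv_ne_zero hβ)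
    rw [mul_inv_cancel₀ hβ, hf_one x hx] at h
    exact (neg_eq_of_add_eq_zero_right h.symm).symm
  -- f 0 β = 0
  have hμ0pos : (0 : WithTop ℝ) < μ (0 : L) := by
    rw [(hμ0 (0:L)).mpr rfl]; exact WithTop.coe_lt_top 0 |>.trans_le le_top |>.trans_eq rfl
  have hf_zero : ∀ β : L, β ≠ 0 → f 0 β = 0 := by
    intro β hβ
    have h := hf1 0 0 hμ0pos hμ0pos β hβ
    rw [add_zero] at h
    exact left_eq_add.mp h
  by_cases hc : c = 0
  · subst hc
    rw [mul_zero, zero_div, hf_zero e he, hf_zero b⁻¹ (inv_ne_zero hb)]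
  -- main case
  set u := b * c / e with hu_def
  set v := c / e with hv_def
  have hu : u ≠ 0 := div_ne_zero (mul_ne_zero hb hc) he
  have hv : v ≠ 0 := div_ne_zero hc he
  have hμu : 0 < μ u := by
    rw [hu_def, hμdiv, hμmul]
    calc (0 : WithTop ℝ) < μ b := hμb
      _ ≤ μ b + μ c := le_add_of_nonneg_right hμc.le
  have hμv : 0 < μ v := by rw [hv_def, hμdiv]; exact hμc
  have hsum : c + u = v := by
    rw [hu_def, hv_def]
    field_simp
    ring
  -- expansions
  have hce : c / e = c * e⁻¹ := div_eq_mul_inv c e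
  have hbce : u = b * (c * e⁻¹) := by rw [hu_def, div_eq_mul_inv, mul_assoc]
  -- f u u = f u b + f u c - f u e
  have hdu : f u b + (f u c + f u e⁻¹) = 0 := by
    have h := hdiag u hμu hu
    rw [hbce] at h
    nth_rewrite 1 [← hbce] at h
    rw [hf2 u hμu b (c * e⁻¹) hb (mul_ne_zero hc (inv_ne_zero he)),
        hf2 u hμu c e⁻¹ hc (inv_ne_zero he)] at h
    exact h
  -- f v v = f v c + f v e⁻¹
  have hdv : f v c + f v e⁻¹ = 0 := by
    have h := hdiag v hμv hv
    rw [hv_def, hce] at h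
    nth_rewrite 1 [← hce] at h
    rw [← hv_def, hf2 v hμv c e⁻¹ hc (inv_ne_zero he)] at h
    exact h
  have hdc : f c c = 0 := hdiag c hμc hc
  -- additivity: f v β = f c β + f u β
  have hadd : ∀ β : L, β ≠ 0 → f v β = f c β + f u β := by
    intro β hβ
    rw [← hsum]
    exact hf1 c u hμc hμu β hβ
  -- goal : f c e = f u b⁻¹ = - f u b
  rw [hf_inv u b hμu hb]
  -- from hdv and hadd: (f c c + f u c) + (f c e⁻¹ + f u e⁻¹) = 0
  have h1 := hdv
  rw [hadd c hc, hadd e⁻¹ (inv_ne_zero he), hdc,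
      hf_inv c e hμc he, hf_inv u e hμu he] at h1
  -- h1 : (0 + f u c) + (- f c e + - f u e) = 0
  have h2 := hdu
  rw [hf_inv u e hμu he] at h2
  -- h2 : f u b + (f u c + - f u e) = 0
  -- deduce f c e = - f u b
  have h3 : f c e + f u b = 0 := by
    calc f c e + f u b
        = (f u b + (f u c + -f u e)) - (0 + f u c + (-f c e + -f u e)) := by abel
      _ = 0 - 0 := by rw [h2, h1]
      _ = 0 := by abel
  exact eq_neg_iff_add_eq_zero.mpr h3
end

section
/- Let Ω be a field complete with respect to a valuation μ and let q ≥ 2 be an integer. Let λ(X) = X + Σ_{i≥1} c_i X^{q^i} and e(X) = X + Σ_{i≥1} d_i X^{q^i} be formal power series with coefficients in Ω such that μ(c_i) ≥ −i and μ(d_i) ≥ −(q^i − 1)/(q − 1) for all i ≥ 1, and such that λ(e(X)) = e(λ(X)) = X as formal power series. Then the map x ↦ λ(x) (the sum of the convergent series) is a bijection from the set {x ∈ Ω : μ(x) > 1/(q−1)} onto itself, with inverse x ↦ e(x), and μ(λ(x)) = μ(x) for every such x. -/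
/-- A sequence `a` tends to `l` with respect to the (additive, `ℝ ∪ {∞}`-valued)
valuation `μ`: the valuation of `a n - l` is eventually larger than any real number. -/
def VTendsto {Ω : Type*} [Field Ω] (μ : Ω → WithTop ℝ) (a : ℕ → Ω) (l : Ω) : Prop :=
  ∀ M : ℝ, ∃ N : ℕ, ∀ n ≥ N, ((M : ℝ) : WithTop ℝ) < μ (a n - l)

/-- `Ω` is complete with respect to the valuation `μ`: every `μ`-Cauchy sequence converges. -/
def VComplete {Ω : Type*} [Field Ω] (μ : Ω → WithTop ℝ) : Prop :=
  ∀ a : ℕ → Ω,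
    (∀ M : ℝ, ∃ N : ℕ, ∀ m ≥ N, ∀ n ≥ N, ((M : ℝ) : WithTop ℝ) < μ (a m - a n)) →
    ∃ l : Ω, VTendsto μ a l

/-- `y` is the value at `x` of the formal power series `F`, i.e. the partial sums
`∑_{i ≤ n} (coeff i F) x ^ i` converge to `y` with respect to the valuation `μ`. -/
def PSEval {Ω : Type*} [Field Ω] (μ : Ω → WithTop ℝ) (F : PowerSeries Ω) (x y : Ω) : Prop :=
  VTendsto μ (fun n => ∑ i ∈ Finset.range (n + 1), PowerSeries.coeff i F * x ^ i) y

section Stmt6AuxSec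
open Finset Polynomial

namespace Stmt6Aux

variable {Ω : Type*} [Field Ω] (μ : Ω → WithTop ℝ)
variable (hμ0 : ∀ x : Ω, μ x = ⊤ ↔ x = 0)
variable (hμmul : ∀ x y : Ω, μ (x * y) = μ x + μ y)
variable (hμadd : ∀ x y : Ω, min (μ x) (μ y) ≤ μ (x + y))

include hμ0 hμmul hμadd
set_option linter.unusedSectionVars false

theorem mu_zero : μ 0 = ⊤ := (hμ0 0).mpr rfl

theorem mu_one : μ 1 = 0 := by
  have h := hμmul 1 1
  rw [mul_one] at h
  have h1 : μ 1 ≠ ⊤ := fun h' => one_ne_zero ((hμ0 1).mp h')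
  lift μ 1 to ℝ using h1 with a
  rw [← WithTop.coe_add, WithTop.coe_eq_coe] at h
  norm_num [show a = 0 by linarith]

theorem mu_neg (x : Ω) : μ (-x) = μ x := by
  have hm1 : μ (-1 : Ω) = 0 := by
    have h := hμmul (-1 : Ω) (-1)
    rw [neg_mul_neg, one_mul, mu_one μ hμ0 hμmul hμadd] at h
    have h1 : μ (-1 : Ω) ≠ ⊤ := fun h' => by
      have := (hμ0 (-1)).mp h'; norm_num at this
    lift μ (-1 : Ω) to ℝ using h1 with a
    rw [← WithTop.coe_add] at h
    have : a + a = 0 := by exact_mod_cast h.symm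
    norm_num [show a = 0 by linarith]
  rw [show -x = -1 * x by ring, hμmul, hm1, zero_add]

theorem mu_sub (x y : Ω) : min (μ x) (μ y) ≤ μ (x - y) := by
  rw [sub_eq_add_neg]
  calc min (μ x) (μ y) = min (μ x) (μ (-y)) := by rw [mu_neg μ hμ0 hμmul hμadd y]
  _ ≤ _ := hμadd _ _

theorem mu_sub_comm (x y : Ω) : μ (x - y) = μ (y - x) := by
  rw [← mu_neg μ hμ0 hμmul hμadd (x - y), neg_sub]

/-- ultrametric equality -/
theorem mu_add_eq (a b : Ω) (h : μ a < μ b) : μ (a + b) = μ a := by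
  refine le_antisymm ?_ ?_
  · by_contra hlt
    push_neg at hlt
    have h2 : min (μ (a + b)) (μ (-b)) ≤ μ a := by
      have := hμadd (a + b) (-b); simpa using this
    rw [mu_neg μ hμ0 hμmul hμadd] at h2
    exact absurd h2 (not_le.mpr (lt_min hlt h))
  · have := hμadd a b
    rwa [min_eq_left h.le] at this

theorem mu_pow (x : Ω) (v : ℝ) (h : μ x = (v : WithTop ℝ)) (k : ℕ) :
    μ (x ^ k) = (((k : ℝ) * v : ℝ) : WithTop ℝ) := by
  induction k with
  | zero => rw [pow_zero, mu_one μ hμ0 hμmul hμadd]; norm_num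
  | succ n ih =>
      rw [pow_succ, hμmul, ih, h, ← WithTop.coe_add]
      congr 1
      push_cast
      ring

theorem mu_pow_le (x : Ω) (c : ℝ) (h : (c : WithTop ℝ) ≤ μ x) (k : ℕ) :
    (((k : ℝ) * c : ℝ) : WithTop ℝ) ≤ μ (x ^ k) := by
  induction k with
  | zero => rw [pow_zero, mu_one μ hμ0 hμmul hμadd]; norm_num
  | succ n ih =>
      rw [pow_succ, hμmul]
      calc (((((n : ℕ) + 1 : ℕ) : ℝ) * c : ℝ) : WithTop ℝ) = ((((n : ℝ) * c : ℝ) : WithTop ℝ)) + (c : WithTop ℝ) := by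
            rw [← WithTop.coe_add, WithTop.coe_eq_coe]; push_cast; ring
      _ ≤ μ (x ^ n) + μ x := add_le_add ih h
      _ = _ := rfl

theorem mu_sum {ι : Type*} (s : Finset ι) (f : ι → Ω) (c : WithTop ℝ)
    (h : ∀ i ∈ s, c ≤ μ (f i)) : c ≤ μ (∑ i ∈ s, f i) := by
  induction s using Finset.cons_induction with
  | empty => rw [Finset.sum_empty, mu_zero μ hμ0 hμmul hμadd]; exact le_top
  | cons a s ha ih =>
      rw [Finset.sum_cons]
      calc c ≤ min (μ (f a)) (μ (∑ i ∈ s, f i)) :=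
            le_min (h a (Finset.mem_cons_self a s)) (ih fun i hi => h i (Finset.mem_cons_of_mem hi))
      _ ≤ _ := hμadd _ _



omit hμ0 hμmul hμadd

theorem coeff_pow_eq_zero {Q : Polynomial Ω} (hQ : Q.coeff 0 = 0) {i k : ℕ} (h : k < i) :
    (Q ^ i).coeff k = 0 := by
  obtain ⟨r, hr⟩ := pow_dvd_pow_of_dvd (Polynomial.X_dvd_iff.mpr hQ) i
  rw [hr, mul_comm, Polynomial.coeff_mul_X_pow', if_neg (by omega)]

theorem coeff_comp_eq_sum (P Q : Polynomial Ω) (hQ : Q.coeff 0 = 0) (k : ℕ) :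
    (P.comp Q).coeff k = ∑ i ∈ range (k + 1), P.coeff i * (Q ^ i).coeff k := by
  have h1 : P.comp Q = ∑ i ∈ range (max (P.natDegree + 1) (k + 1)),
      Polynomial.C (P.coeff i) * Q ^ i := by
    rw [Polynomial.comp_eq_sum_left]
    exact Polynomial.sum_over_range' P (fun n => by simp) _
      (lt_of_lt_of_le (Nat.lt_succ_self _) (le_max_left _ _))
  rw [h1, Polynomial.finset_sum_coeff]
  simp only [Polynomial.coeff_C_mul]
  symm
  apply Finset.sum_subset (Finset.range_subset_range.mpr (le_max_right _ _))
  intro i _ hi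
  rw [Finset.mem_range] at hi
  rw [coeff_pow_eq_zero hQ (by omega), mul_zero]

theorem coeff_mul_congr {A B A' B' : Polynomial Ω} (k : ℕ)
    (hA : ∀ j ≤ k, A.coeff j = A'.coeff j) (hB : ∀ j ≤ k, B.coeff j = B'.coeff j) :
    ∀ j ≤ k, (A * B).coeff j = (A' * B').coeff j := by
  intro j hj
  rw [Polynomial.coeff_mul, Polynomial.coeff_mul]
  apply Finset.sum_congr rfl
  intro uv huv
  rw [Finset.HasAntidiagonal.mem_antidiagonal] at huv
  rw [hA _ (le_trans (by omega) hj), hB _ (le_trans (by omega) hj)]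

theorem coeff_pow_congr {A A' : Polynomial Ω} (k : ℕ)
    (hA : ∀ j ≤ k, A.coeff j = A'.coeff j) (i : ℕ) :
    ∀ j ≤ k, (A ^ i).coeff j = (A' ^ i).coeff j := by
  induction i with
  | zero => simp
  | succ n ih =>
      simp only [pow_succ]
      exact coeff_mul_congr k ih hA

def GB (μ : Ω → WithTop ℝ) (s : ℝ) (a : ℕ) (P : Polynomial Ω) : Prop :=
  ∀ k : ℕ, (k < a → P.coeff k = 0) ∧
    ((↑(-(((k : ℝ) - a) * s)) : WithTop ℝ) ≤ μ (P.coeff k))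

include hμ0 hμmul hμadd

theorem GB_mul {s : ℝ} {a b : ℕ} {P Q : Polynomial Ω} (hP : GB μ s a P) (hQ : GB μ s b Q) :
    GB μ s (a + b) (P * Q) := by
  intro k
  constructor
  · intro hk
    rw [Polynomial.coeff_mul]
    apply Finset.sum_eq_zero
    intro uv huv
    rw [Finset.HasAntidiagonal.mem_antidiagonal] at huv
    rcases lt_or_ge uv.1 a with h | h
    · rw [(hP uv.1).1 h, zero_mul]
    · rw [(hQ uv.2).1 (by omega), mul_zero]
  · rw [Polynomial.coeff_mul]
    apply mu_sum μ hμ0 hμmul hμadd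
    intro uv huv
    rw [Finset.HasAntidiagonal.mem_antidiagonal] at huv
    rw [hμmul]
    have hcast : (uv.1 : ℝ) + (uv.2 : ℝ) = (k : ℝ) := by exact_mod_cast congrArg (Nat.cast : ℕ → ℝ) huv
    calc (↑(-(((k : ℝ) - (a + b : ℕ)) * s)) : WithTop ℝ)
        = ↑(-(((uv.1 : ℝ) - a) * s)) + ↑(-(((uv.2 : ℝ) - b) * s)) := by
          rw [← WithTop.coe_add]
          congr 1
          push_cast
          linear_combination s * hcast
      _ ≤ _ := add_le_add (hP uv.1).2 (hQ uv.2).2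

theorem GB_one {s : ℝ} : GB μ s 0 (1 : Polynomial Ω) := by
  intro k
  constructor
  · omega
  · rcases Nat.eq_zero_or_pos k with rfl | hk
    · rw [Polynomial.coeff_one, if_pos rfl, mu_one μ hμ0 hμmul hμadd]
      norm_num
    · rw [Polynomial.coeff_one, if_neg (by omega), mu_zero μ hμ0 hμmul hμadd]
      exact le_top

theorem GB_pow {s : ℝ} {Q : Polynomial Ω} (hQ : GB μ s 1 Q) (i : ℕ) : GB μ s i (Q ^ i) := by
  induction i with
  | zero => simpa using GB_one μ hμ0 hμmul hμadd
  | succ n ih =>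
      rw [pow_succ]
      exact GB_mul μ hμ0 hμmul hμadd ih hQ

theorem GB_comp {s : ℝ} {P Q : Polynomial Ω} (hP : GB μ s 1 P) (hQ : GB μ s 1 Q) :
    GB μ s 1 (P.comp Q) := by
  have hQ0 : Q.coeff 0 = 0 := (hQ 0).1 Nat.zero_lt_one
  intro k
  constructor
  · intro hk
    interval_cases k
    rw [coeff_comp_eq_sum P Q hQ0]
    rw [Finset.range_one, Finset.sum_singleton, (hP 0).1 Nat.zero_lt_one, zero_mul]
  · rw [coeff_comp_eq_sum P Q hQ0]
    apply mu_sum μ hμ0 hμmul hμadd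
    intro i _
    rw [hμmul]
    calc (↑(-(((k : ℝ) - (1 : ℕ)) * s)) : WithTop ℝ)
        = ↑(-(((i : ℝ) - (1 : ℕ)) * s)) + ↑(-(((k : ℝ) - i) * s)) := by
          rw [← WithTop.coe_add]
          congr 1
          push_cast
          ring
      _ ≤ _ := add_le_add (hP i).2 ((GB_pow μ hμ0 hμmul hμadd hQ i) k).2

theorem GB_trunc {s : ℝ} (F : PowerSeries Ω) (hF0 : PowerSeries.coeff 0 F = 0)
    (hFb : ∀ k : ℕ, 1 ≤ k → ((↑(-(((k : ℝ) - 1) * s)) : WithTop ℝ) ≤ μ (PowerSeries.coeff k F)))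
    (n : ℕ) : GB μ s 1 (F.trunc n) := by
  intro k
  rw [PowerSeries.coeff_trunc]
  constructor
  · intro hk
    interval_cases k
    simp [hF0]
  · split_ifs with h
    · rcases Nat.eq_zero_or_pos k with rfl | hk
      · rw [hF0, mu_zero μ hμ0 hμmul hμadd]; exact le_top
      · exact_mod_cast hFb k hk
    · rw [mu_zero μ hμ0 hμmul hμadd]; exact le_top



omit hμ0 hμmul hμadd

theorem trunc_eval (F : PowerSeries Ω) (x : Ω) (n : ℕ) :
    (F.trunc (n + 1)).eval x = ∑ i ∈ Finset.range (n + 1), PowerSeries.coeff i F * x ^ i := by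
  rw [Polynomial.eval_eq_sum_range' (PowerSeries.natDegree_trunc_lt F n)]
  apply Finset.sum_congr rfl
  intro i hi
  rw [PowerSeries.coeff_trunc, if_pos (Finset.mem_range.mp hi)]

theorem sum_zero_pow (F : PowerSeries Ω) (hF0 : PowerSeries.coeff 0 F = 0) (n : ℕ) :
    ∑ i ∈ Finset.range (n + 1), PowerSeries.coeff i F * (0 : Ω) ^ i = 0 := by
  apply Finset.sum_eq_zero
  intro i _
  rcases Nat.eq_zero_or_pos i with rfl | hi
  · rw [hF0, zero_mul]
  · rw [zero_pow (by omega), mul_zero]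

include hμ0 hμmul hμadd

theorem eval_lb (P : Polynomial Ω) (x : Ω) (c : WithTop ℝ)
    (h : ∀ i : ℕ, c ≤ μ (P.coeff i * x ^ i)) : c ≤ μ (P.eval x) := by
  rw [Polynomial.eval_eq_sum_range]
  exact mu_sum μ hμ0 hμmul hμadd _ _ c (fun i _ => h i)

theorem term_lb {s : ℝ} (F : PowerSeries Ω)
    (hFb : ∀ k : ℕ, 1 ≤ k → ((↑(-(((k : ℝ) - 1) * s)) : WithTop ℝ) ≤ μ (PowerSeries.coeff k F)))
    (x : Ω) (v : ℝ) (hx : μ x = (v : WithTop ℝ)) (k : ℕ) (hk : 1 ≤ k) :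
    ((↑(v + ((k : ℝ) - 1) * (v - s)) : WithTop ℝ)) ≤ μ (PowerSeries.coeff k F * x ^ k) := by
  rw [hμmul, mu_pow μ hμ0 hμmul hμadd x v hx k]
  calc ((↑(v + ((k : ℝ) - 1) * (v - s)) : WithTop ℝ))
      = (↑(-(((k : ℝ) - 1) * s)) : WithTop ℝ) + ↑((k : ℝ) * v) := by
        rw [← WithTop.coe_add]; congr 1; ring
    _ ≤ _ := add_le_add (hFb k hk) le_rfl

theorem eval_dist {s : ℝ} {P : Polynomial Ω} (hP : GB μ s 1 P) (w u : Ω)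
    (hw : ((s : ℝ) : WithTop ℝ) ≤ μ w) (hu : ((s : ℝ) : WithTop ℝ) ≤ μ u) :
    μ (w - u) ≤ μ (P.eval w - P.eval u) := by
  have key : P.eval w - P.eval u = ∑ i ∈ Finset.range (P.natDegree + 1),
      P.coeff i * ((∑ t ∈ Finset.range i, w ^ t * u ^ (i - 1 - t)) * (w - u)) := by
    rw [Polynomial.eval_eq_sum_range, Polynomial.eval_eq_sum_range, ← Finset.sum_sub_distrib]
    apply Finset.sum_congr rfl
    intro i _
    rw [geom_sum₂_mul, mul_sub]
  rw [key]
  apply mu_sum μ hμ0 hμmul hμadd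
  intro i _
  rcases Nat.eq_zero_or_pos i with rfl | hi
  · simp only [Finset.range_zero, Finset.sum_empty, zero_mul, mul_zero]
    rw [mu_zero μ hμ0 hμmul hμadd]
    exact le_top
  · rw [hμmul, hμmul]
    have h1 : (↑(-(((i : ℝ) - 1) * s)) : WithTop ℝ) ≤ μ (P.coeff i) := by
      have := (hP i).2; push_cast at this ⊢; exact this
    have hG : ((((i : ℝ) - 1) * s : ℝ) : WithTop ℝ)
        ≤ μ (∑ t ∈ Finset.range i, w ^ t * u ^ (i - 1 - t)) := by
      apply mu_sum μ hμ0 hμmul hμadd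
      intro t ht
      rw [hμmul]
      have ht' : t < i := Finset.mem_range.mp ht
      have hcast : ((i - 1 - t : ℕ) : ℝ) = (i : ℝ) - 1 - (t : ℝ) := by
        rw [Nat.cast_sub (by omega), Nat.cast_sub (by omega)]
        push_cast; ring
      calc ((((i : ℝ) - 1) * s : ℝ) : WithTop ℝ)
          = ↑((t : ℝ) * s) + ↑(((i - 1 - t : ℕ) : ℝ) * s) := by
            rw [← WithTop.coe_add]; congr 1; rw [hcast]; ring
        _ ≤ _ := add_le_add (mu_pow_le μ hμ0 hμmul hμadd w s hw t)
            (mu_pow_le μ hμ0 hμmul hμadd u s hu (i - 1 - t))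
    calc μ (w - u)
        = ((↑(-(((i : ℝ) - 1) * s)) : WithTop ℝ) + ↑(((i : ℝ) - 1) * s)) + μ (w - u) := by
          rw [← WithTop.coe_add, neg_add_cancel, WithTop.coe_zero, zero_add]
      _ = (↑(-(((i : ℝ) - 1) * s)) : WithTop ℝ) + (↑(((i : ℝ) - 1) * s) + μ (w - u)) := by
          rw [add_assoc]
      _ ≤ _ := add_le_add h1 (add_le_add hG le_rfl)

theorem psEval_zero (F : PowerSeries Ω) (hF0 : PowerSeries.coeff 0 F = 0) :
    PSEval μ F 0 0 := by
  intro M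
  refine ⟨0, fun n _ => ?_⟩
  simp only [sum_zero_pow F hF0 n, sub_zero, mu_zero μ hμ0 hμmul hμadd]
  exact WithTop.coe_lt_top M

theorem psEval_zero_unique (F : PowerSeries Ω) (hF0 : PowerSeries.coeff 0 F = 0)
    (y : Ω) (h : PSEval μ F 0 y) : y = 0 := by
  by_contra hy
  have hμy : μ (-y) ≠ ⊤ := fun h' => hy (by simpa using (hμ0 (-y)).mp h')
  obtain ⟨r, hr⟩ := WithTop.ne_top_iff_exists.mp hμy
  obtain ⟨N, hN⟩ := h r
  have := hN N le_rfl
  simp only [sum_zero_pow F hF0 N, zero_sub, ← hr] at this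
  exact lt_irrefl _ this

theorem conv {s : ℝ} (hcomplete : VComplete μ) (F : PowerSeries Ω)
    (hF0 : PowerSeries.coeff 0 F = 0)
    (hFb : ∀ k : ℕ, 1 ≤ k → ((↑(-(((k : ℝ) - 1) * s)) : WithTop ℝ) ≤ μ (PowerSeries.coeff k F)))
    (x : Ω) (hx : ((s : ℝ) : WithTop ℝ) < μ x) : ∃ y, PSEval μ F x y := by
  rcases eq_or_ne x 0 with rfl | hx0
  · exact ⟨0, psEval_zero μ hμ0 hμmul hμadd F hF0⟩
  apply hcomplete
  have hxt : μ x ≠ ⊤ := fun h => hx0 ((hμ0 x).mp h)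
  obtain ⟨v, hv⟩ := WithTop.ne_top_iff_exists.mp hxt
  have hsv : s < v := by rw [← hv] at hx; exact_mod_cast hx
  intro M
  obtain ⟨N, hN⟩ := exists_nat_gt ((M - v) / (v - s))
  have hNM : M < v + (N : ℝ) * (v - s) := by
    rw [div_lt_iff₀ (by linarith)] at hN; linarith
  refine ⟨N, ?_⟩
  have key : ∀ n m : ℕ, N ≤ n → n ≤ m →
      ((M : ℝ) : WithTop ℝ) < μ ((∑ i ∈ Finset.range (m + 1), PowerSeries.coeff i F * x ^ i)
        - ∑ i ∈ Finset.range (n + 1), PowerSeries.coeff i F * x ^ i) := by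
    intro n m hn hnm
    rw [← Finset.sum_Ico_eq_sub _ (by omega : n + 1 ≤ m + 1)]
    refine lt_of_lt_of_le ?_
      (mu_sum μ hμ0 hμmul hμadd _ _ ((v + (N : ℝ) * (v - s) : ℝ) : WithTop ℝ) ?_)
    · exact_mod_cast hNM
    intro i hi
    rw [Finset.mem_Ico] at hi
    refine le_trans ?_ (term_lb μ hμ0 hμmul hμadd F hFb x v hv.symm i (by omega))
    rw [WithTop.coe_le_coe]
    have hNi : (N : ℝ) ≤ (i : ℝ) - 1 := by
      have : (N : ℝ) + 1 ≤ (i : ℝ) := by exact_mod_cast Nat.succ_le_of_lt (by omega)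
      linarith
    nlinarith
  intro m hm n hn
  rcases le_total n m with h | h
  · exact key n m hn h
  · exact lt_of_lt_of_eq (key m n hm h) (mu_sub_comm μ hμ0 hμmul hμadd _ _)

theorem main {s : ℝ} (F G : PowerSeries Ω)
    (hF0 : PowerSeries.coeff 0 F = 0) (hF1 : PowerSeries.coeff 1 F = 1)
    (hFb : ∀ k : ℕ, 1 ≤ k → ((↑(-(((k : ℝ) - 1) * s)) : WithTop ℝ) ≤ μ (PowerSeries.coeff k F)))
    (hG0 : PowerSeries.coeff 0 G = 0)
    (hGb : ∀ k : ℕ, 1 ≤ k → ((↑(-(((k : ℝ) - 1) * s)) : WithTop ℝ) ≤ μ (PowerSeries.coeff k G)))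
    (hGF : ∀ n : ℕ, ((G.trunc (n + 1)).comp (F.trunc (n + 1))).coeff n = if n = 1 then 1 else 0)
    (x y : Ω) (hx : ((s : ℝ) : WithTop ℝ) < μ x) (hxy : PSEval μ F x y) :
    ((s : ℝ) : WithTop ℝ) < μ y ∧ μ y = μ x ∧ PSEval μ G y x := by
  rcases eq_or_ne x 0 with rfl | hx0
  · have hy0 : y = 0 := psEval_zero_unique μ hμ0 hμmul hμadd F hF0 y hxy
    subst hy0
    exact ⟨by rw [mu_zero μ hμ0 hμmul hμadd]; exact WithTop.coe_lt_top s,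
      rfl, psEval_zero μ hμ0 hμmul hμadd G hG0⟩
  have hxt : μ x ≠ ⊤ := fun h => hx0 ((hμ0 x).mp h)
  obtain ⟨v, hv⟩ := WithTop.ne_top_iff_exists.mp hxt
  have hsv : s < v := by rw [← hv] at hx; exact_mod_cast hx
  set T : ℕ → Ω := fun n => ∑ i ∈ Finset.range (n + 1), PowerSeries.coeff i F * x ^ i with hTdef
  have hTx : ∀ n : ℕ, 1 ≤ n → ((v + (v - s) : ℝ) : WithTop ℝ) ≤ μ (T n - x) := by
    intro n hn
    have h2 : ∑ i ∈ Finset.range 2, PowerSeries.coeff i F * x ^ i = x := by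
      rw [Finset.sum_range_succ, Finset.sum_range_one, hF0, hF1]
      simp
    have hsub : T n - x = ∑ i ∈ Finset.Ico 2 (n + 1), PowerSeries.coeff i F * x ^ i := by
      rw [Finset.sum_Ico_eq_sub _ (by omega : 2 ≤ n + 1), h2]
    rw [hsub]
    apply mu_sum μ hμ0 hμmul hμadd
    intro i hi
    rw [Finset.mem_Ico] at hi
    refine le_trans ?_ (term_lb μ hμ0 hμmul hμadd F hFb x v hv.symm i (by omega))
    rw [WithTop.coe_le_coe]
    have h1 : (1 : ℝ) ≤ (i : ℝ) - 1 := by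
      have : (2 : ℝ) ≤ (i : ℝ) := by exact_mod_cast hi.1
      linarith
    nlinarith
  have hTn : ∀ n : ℕ, 1 ≤ n → μ (T n) = (v : WithTop ℝ) := by
    intro n hn
    have hdec : T n = x + (T n - x) := by ring
    have hlt : μ x < μ (T n - x) := by
      rw [← hv]
      refine lt_of_lt_of_le ?_ (hTx n hn)
      exact_mod_cast (by linarith : v < v + (v - s))
    rw [hdec, mu_add_eq μ hμ0 hμmul hμadd x (T n - x) hlt]
    exact hv.symm
  have hyv : μ y = (v : WithTop ℝ) := by
    obtain ⟨N, hN⟩ := hxy v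
    have h1 : ((v : ℝ) : WithTop ℝ) < μ (T (max N 1) - y) := hN (max N 1) (le_max_left _ _)
    have h3 : μ (T (max N 1)) = (v : WithTop ℝ) := hTn _ (le_max_right _ _)
    have hdec : y = T (max N 1) + (y - T (max N 1)) := by ring
    have hlt : μ (T (max N 1)) < μ (y - T (max N 1)) := by
      rw [mu_sub_comm μ hμ0 hμmul hμadd, h3]
      exact h1
    rw [hdec, mu_add_eq μ hμ0 hμmul hμadd _ _ hlt]
    exact h3
  refine ⟨by rw [hyv]; exact_mod_cast hsv, by rw [hyv, hv], ?_⟩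
  intro M
  obtain ⟨N₁, hN₁⟩ := hxy M
  obtain ⟨N₂, hN₂⟩ := exists_nat_gt ((M - v) / (v - s))
  have hNM : M < v + (N₂ : ℝ) * (v - s) := by
    rw [div_lt_iff₀ (by linarith)] at hN₂; linarith
  refine ⟨max (max N₁ N₂) 1, fun m hm => ?_⟩
  have hm1 : 1 ≤ m := le_trans (le_max_right _ _) hm
  have hmN₁ : N₁ ≤ m := le_trans (le_trans (le_max_left _ _) (le_max_left _ _)) hm
  have hmN₂ : N₂ ≤ m := le_trans (le_trans (le_max_right _ _) (le_max_left _ _)) hm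
  set P : Polynomial Ω := (G.trunc (m + 1)).comp (F.trunc (m + 1)) with hPdef
  have hF0' : (F.trunc (m + 1)).coeff 0 = 0 := by
    rw [PowerSeries.coeff_trunc]; simp [hF0]
  have hA : (∑ i ∈ Finset.range (m + 1), PowerSeries.coeff i G * y ^ i)
      = (G.trunc (m + 1)).eval y := (trunc_eval G y m).symm
  have hB : (G.trunc (m + 1)).eval (T m) = P.eval x := by
    rw [hPdef, Polynomial.eval_comp, trunc_eval F x m]
  have hGB_G : GB μ s 1 (G.trunc (m + 1)) := GB_trunc μ hμ0 hμmul hμadd G hG0 hGb (m + 1)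
  have hGB_F : GB μ s 1 (F.trunc (m + 1)) := GB_trunc μ hμ0 hμmul hμadd F hF0 hFb (m + 1)
  have hb1 : ((M : ℝ) : WithTop ℝ)
      < μ ((G.trunc (m + 1)).eval y - (G.trunc (m + 1)).eval (T m)) := by
    refine lt_of_lt_of_le ?_ (eval_dist μ hμ0 hμmul hμadd hGB_G y (T m) ?_ ?_)
    · rw [mu_sub_comm μ hμ0 hμmul hμadd]
      exact hN₁ m hmN₁
    · rw [hyv]; exact_mod_cast hsv.le
    · rw [hTn m hm1]; exact_mod_cast hsv.le
  have hPk : ∀ k : ℕ, k ≤ m → P.coeff k = if k = 1 then 1 else 0 := by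
    intro k hk
    rw [hPdef, ← hGF k]
    have hF0k : (F.trunc (k + 1)).coeff 0 = 0 := by
      rw [PowerSeries.coeff_trunc]; simp [hF0]
    rw [coeff_comp_eq_sum _ _ hF0', coeff_comp_eq_sum _ _ hF0k]
    apply Finset.sum_congr rfl
    intro i hi
    rw [Finset.mem_range] at hi
    have e1 : (G.trunc (m + 1)).coeff i = (G.trunc (k + 1)).coeff i := by
      rw [PowerSeries.coeff_trunc, PowerSeries.coeff_trunc, if_pos (by omega), if_pos (by omega)]
    have e2 : ∀ j ≤ k, (F.trunc (m + 1)).coeff j = (F.trunc (k + 1)).coeff j := by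
      intro j hj
      rw [PowerSeries.coeff_trunc, PowerSeries.coeff_trunc, if_pos (by omega), if_pos (by omega)]
    rw [e1, coeff_pow_congr k e2 i k le_rfl]
  have hGBP : GB μ s 1 P := GB_comp μ hμ0 hμmul hμadd hGB_G hGB_F
  have hb2 : ((M : ℝ) : WithTop ℝ) < μ (P.eval x - x) := by
    have hRe : P.eval x - x = (P - Polynomial.X).eval x := by
      rw [Polynomial.eval_sub, Polynomial.eval_X]
    rw [hRe]
    refine lt_of_lt_of_le ?_
      (eval_lb μ hμ0 hμmul hμadd _ x ((v + (m : ℝ) * (v - s) : ℝ) : WithTop ℝ) ?_)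
    · have hc : (N₂ : ℝ) ≤ (m : ℝ) := by exact_mod_cast hmN₂
      have : v + (N₂ : ℝ) * (v - s) ≤ v + (m : ℝ) * (v - s) := by nlinarith
      exact_mod_cast lt_of_lt_of_le hNM this
    · intro k
      rcases le_or_gt k m with hk | hk
      · have hzero : (P - Polynomial.X).coeff k = 0 := by
          rw [Polynomial.coeff_sub, hPk k hk, Polynomial.coeff_X]
          by_cases h1 : k = 1
          · subst h1; norm_num
          · rw [if_neg h1, if_neg (fun h => h1 h.symm), sub_zero]
        rw [hzero, zero_mul, mu_zero μ hμ0 hμmul hμadd]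
        exact le_top
      · have hk2 : (P - Polynomial.X).coeff k = P.coeff k := by
          rw [Polynomial.coeff_sub, Polynomial.coeff_X, if_neg (by omega), sub_zero]
        rw [hk2, hμmul, mu_pow μ hμ0 hμmul hμadd x v hv.symm k]
        have h1 : (↑(-(((k : ℝ) - 1) * s)) : WithTop ℝ) ≤ μ (P.coeff k) := by
          have := (hGBP k).2; push_cast at this ⊢; exact this
        calc ((v + (m : ℝ) * (v - s) : ℝ) : WithTop ℝ)
            ≤ ((v + ((k : ℝ) - 1) * (v - s) : ℝ) : WithTop ℝ) := by
              rw [WithTop.coe_le_coe]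
              have hmk : (m : ℝ) ≤ (k : ℝ) - 1 := by
                have : (m : ℝ) + 1 ≤ (k : ℝ) := by exact_mod_cast hk
                linarith
              nlinarith
          _ = (↑(-(((k : ℝ) - 1) * s)) : WithTop ℝ) + ↑((k : ℝ) * v) := by
              rw [← WithTop.coe_add]; congr 1; ring
          _ ≤ _ := add_le_add h1 le_rfl
  have hdec : (G.trunc (m + 1)).eval y - x
      = ((G.trunc (m + 1)).eval y - (G.trunc (m + 1)).eval (T m))
        + ((G.trunc (m + 1)).eval (T m) - x) := by ring
  have hmin := hμadd ((G.trunc (m + 1)).eval y - (G.trunc (m + 1)).eval (T m))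
    ((G.trunc (m + 1)).eval (T m) - x)
  rw [← hdec] at hmin
  show ((M : ℝ) : WithTop ℝ)
      < μ ((∑ i ∈ Finset.range (m + 1), PowerSeries.coeff i G * y ^ i) - x)
  rw [hA]
  refine lt_of_lt_of_le (lt_min hb1 ?_) hmin
  rw [hB]
  exact hb2

end Stmt6Aux

end Stmt6AuxSec

/-- Let `Ω` be a field complete with respect to a valuation `μ`, `q ≥ 2`,
and let `Λ(X) = X + ∑_{i ≥ 1} c_i X^{q^i}` and `E(X) = X + ∑_{i ≥ 1} d_i X^{q^i}` be formal
power series over `Ω` with `μ c_i ≥ -i`, `μ d_i ≥ -(q^i - 1)/(q-1)`, which are mutually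
compositionally inverse (`Λ(E(X)) = E(Λ(X)) = X` as formal power series, expressed via
truncations: the `n`-th coefficient of the composite is `1` for `n = 1` and `0` otherwise).
Then `x ↦ Λ(x)` is a bijection of the ball `{x : μ x > 1/(q-1)}` onto itself with inverse
`x ↦ E(x)`, and `μ (Λ(x)) = μ x` for every such `x`. -/


theorem stmt_6 {Ω : Type*} [Field Ω] (μ : Ω → WithTop ℝ)
    (hμ0 : ∀ x : Ω, μ x = ⊤ ↔ x = 0)
    (hμmul : ∀ x y : Ω, μ (x * y) = μ x + μ y)
    (hμadd : ∀ x y : Ω, min (μ x) (μ y) ≤ μ (x + y))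
    (hcomplete : VComplete μ)
    (q : ℕ) (hq : 2 ≤ q)
    (Λ E : PowerSeries Ω)
    (hΛ0 : PowerSeries.coeff 0 Λ = 0) (hΛ1 : PowerSeries.coeff 1 Λ = 1)
    (hΛsupp : ∀ n : ℕ, n ≠ 1 → (¬ ∃ i : ℕ, 1 ≤ i ∧ n = q ^ i) → PowerSeries.coeff n Λ = 0)
    (hΛbound : ∀ i : ℕ, 1 ≤ i →
      ((-(i : ℝ) : ℝ) : WithTop ℝ) ≤ μ (PowerSeries.coeff (q ^ i) Λ))
    (hE0 : PowerSeries.coeff 0 E = 0) (hE1 : PowerSeries.coeff 1 E = 1)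
    (hEsupp : ∀ n : ℕ, n ≠ 1 → (¬ ∃ i : ℕ, 1 ≤ i ∧ n = q ^ i) → PowerSeries.coeff n E = 0)
    (hEbound : ∀ i : ℕ, 1 ≤ i →
      ((-(((q : ℝ) ^ i - 1) / ((q : ℝ) - 1)) : ℝ) : WithTop ℝ)
        ≤ μ (PowerSeries.coeff (q ^ i) E))
    (hΛE : ∀ n : ℕ, ((Λ.trunc (n + 1)).comp (E.trunc (n + 1))).coeff n
      = if n = 1 then 1 else 0)
    (hEΛ : ∀ n : ℕ, ((E.trunc (n + 1)).comp (Λ.trunc (n + 1))).coeff n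
      = if n = 1 then 1 else 0) :
    ∀ x : Ω, ((1 / ((q : ℝ) - 1) : ℝ) : WithTop ℝ) < μ x →
      (∃ y : Ω, PSEval μ Λ x y) ∧
      (∃ y : Ω, PSEval μ E x y) ∧
      (∀ y : Ω, PSEval μ Λ x y →
        ((1 / ((q : ℝ) - 1) : ℝ) : WithTop ℝ) < μ y ∧ μ y = μ x ∧ PSEval μ E y x) ∧
      (∀ y : Ω, PSEval μ E x y →
        ((1 / ((q : ℝ) - 1) : ℝ) : WithTop ℝ) < μ y ∧ PSEval μ Λ y x) := by
  have hq1 : (1 : ℝ) < (q : ℝ) := by exact_mod_cast lt_of_lt_of_le one_lt_two hq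
  set s : ℝ := 1 / ((q : ℝ) - 1) with hs
  have key_pow : ∀ i : ℕ, (i : ℝ) * ((q : ℝ) - 1) ≤ (q : ℝ) ^ i - 1 := by
    intro i
    have h1 := one_add_mul_le_pow (by linarith : (-2 : ℝ) ≤ (q : ℝ) - 1) i
    rw [show (1 + ((q : ℝ) - 1)) = (q : ℝ) by ring] at h1
    linarith
  have hΛb : ∀ k : ℕ, 1 ≤ k →
      ((↑(-(((k : ℝ) - 1) * s)) : WithTop ℝ) ≤ μ (PowerSeries.coeff k Λ)) := by
    intro k hk
    rcases eq_or_ne k 1 with rfl | hk1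
    · rw [hΛ1, Stmt6Aux.mu_one μ hμ0 hμmul hμadd]
      norm_num
    by_cases hex : ∃ i : ℕ, 1 ≤ i ∧ k = q ^ i
    · obtain ⟨i, hi1, rfl⟩ := hex
      refine le_trans ?_ (hΛbound i hi1)
      rw [WithTop.coe_le_coe]
      have hc : ((q ^ i : ℕ) : ℝ) = (q : ℝ) ^ i := by push_cast; ring
      rw [hc, hs]
      have h3 : (i : ℝ) ≤ ((q : ℝ) ^ i - 1) * (1 / ((q : ℝ) - 1)) := by
        rw [mul_one_div, le_div_iff₀ (by linarith : (0 : ℝ) < (q : ℝ) - 1)]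
        exact key_pow i
      linarith
    · rw [hΛsupp k hk1 hex, Stmt6Aux.mu_zero μ hμ0 hμmul hμadd]
      exact le_top
  have hEb : ∀ k : ℕ, 1 ≤ k →
      ((↑(-(((k : ℝ) - 1) * s)) : WithTop ℝ) ≤ μ (PowerSeries.coeff k E)) := by
    intro k hk
    rcases eq_or_ne k 1 with rfl | hk1
    · rw [hE1, Stmt6Aux.mu_one μ hμ0 hμmul hμadd]
      norm_num
    by_cases hex : ∃ i : ℕ, 1 ≤ i ∧ k = q ^ i
    · obtain ⟨i, hi1, rfl⟩ := hex
      refine le_trans ?_ (hEbound i hi1)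
      rw [WithTop.coe_le_coe]
      have hc : ((q ^ i : ℕ) : ℝ) = (q : ℝ) ^ i := by push_cast; ring
      rw [hc, hs, mul_one_div]
    · rw [hEsupp k hk1 hex, Stmt6Aux.mu_zero μ hμ0 hμmul hμadd]
      exact le_top
  intro x hx
  refine ⟨Stmt6Aux.conv μ hμ0 hμmul hμadd hcomplete Λ hΛ0 hΛb x hx,
    Stmt6Aux.conv μ hμ0 hμmul hμadd hcomplete E hE0 hEb x hx, ?_, ?_⟩
  · intro y hy
    exact Stmt6Aux.main μ hμ0 hμmul hμadd Λ E hΛ0 hΛ1 hΛb hE0 hEb hEΛ x y hx hy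
  · intro y hy
    obtain ⟨h1, _, h3⟩ :=
      Stmt6Aux.main μ hμ0 hμmul hμadd E Λ hE0 hE1 hEb hΛ0 hΛb hΛE x y hx hy
    exact ⟨h1, h3⟩
end

section
/- Let L ⊆ Ω be fields, let W ⊆ L be a finite subgroup of the additive group (L, +) with n elements, and let ξ ∈ Ω be such that the polynomial P(X) = ∏_{w ∈ W} (X − ξ − w) has all its coefficients in L. Then P is separable, the extension L(ξ)/L is a finite Galois extension, the map σ ↦ σ(ξ) − ξ is an injective group homomorphism from Gal(L(ξ)/L) into W, and consequently Gal(L(ξ)/L) is abelian and [L(ξ) : L] divides n. -/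
/-!
Every root of `P` is of the form `ξ + w` with `w ∈ W ⊆ L`, so `P` has `n` distinct roots, all
lying in `L(ξ)`; hence `L(ξ)` is a splitting field of the separable polynomial `P` over `L`.
An automorphism `σ` sends `ξ` to another root `ξ + w`, and since `σ` fixes `w ∈ L`,
`σ ↦ σ ξ - ξ` is additive; it is injective because `ξ` generates `L(ξ)`. Thus `Gal(L(ξ)/L)`
embeds into `W`, and Lagrange gives `[L(ξ) : L] = |Gal(L(ξ)/L)| ∣ n`.
-/

open IntermediateField Polynomial

section Translation

variable {L E : Type*} [CommRing L] [Ring E] [Algebra L E]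

theorem AlgEquiv.mul_apply_sub_self_of_mem_range {σ τ : E ≃ₐ[L] E} {x : E}
    (hτ : τ x - x ∈ (algebraMap L E).range) :
    (σ * τ) x - x = (σ x - x) + (τ x - x) := by
  obtain ⟨c, hc⟩ := hτ
  rw [AlgEquiv.mul_apply, eq_add_of_sub_eq' hc.symm, map_add, AlgEquiv.commutes]
  abel

def translationHom (x : E) (hx : ∀ σ : E ≃ₐ[L] E, σ x - x ∈ (algebraMap L E).range) :
    Additive (E ≃ₐ[L] E) →+ E where
  toFun σ := σ.toMul x - x
  map_zero' := sub_self x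
  map_add' _ τ := AlgEquiv.mul_apply_sub_self_of_mem_range (hx τ.toMul)

theorem card_algEquiv_dvd_of_forall_sub_self_mem {W : AddSubgroup L} {x : E}
    (hinj : Function.Injective (algebraMap L E))
    (hW : ∀ σ : E ≃ₐ[L] E, ∃ w ∈ W, σ x - x = algebraMap L E w)
    (hx : ∀ σ τ : E ≃ₐ[L] E, σ x = τ x → σ = τ) :
    Nat.card (E ≃ₐ[L] E) ∣ Nat.card W := by
  let f := translationHom x fun σ ↦ (hW σ).elim fun w hw ↦ ⟨w, hw.2.symm⟩
  have hf : Function.Injective f := fun σ τ h ↦ hx _ _ (sub_left_injective h)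
  have hrange : f.range ≤ W.map (algebraMap L E : L →+ E) := by
    rintro _ ⟨σ, rfl⟩
    obtain ⟨w, hw, hσ⟩ := hW σ.toMul
    exact ⟨w, hw, hσ.symm⟩
  calc Nat.card (E ≃ₐ[L] E) = Nat.card f.range :=
        (Nat.card_congr Additive.toMul).symm.trans (Nat.card_congr (AddMonoidHom.ofInjective hf))
    _ ∣ Nat.card (W.map (algebraMap L E : L →+ E)) := AddSubgroup.card_dvd_of_le hrange
    _ = Nat.card W := AddSubgroup.card_map_of_injective (f := (algebraMap L E : L →+ E)) hinj

end Translation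

section TranslatesOfRoot

variable {L Ω : Type*} [Field L] [Field Ω] [Algebra L Ω]

theorem separable_prod_X_sub_C_add_algebraMap (ξ : Ω) (s : Finset L) :
    (∏ w ∈ s, (X - C (ξ + algebraMap L Ω w))).Separable :=
  separable_prod_X_sub_C_iff'.mpr fun _ _ _ _ h ↦ (algebraMap L Ω).injective (add_left_cancel h)

theorem algEquiv_adjoin_simple_ext {ξ : Ω} {σ τ : L⟮ξ⟯ ≃ₐ[L] L⟮ξ⟯}
    (h : σ (AdjoinSimple.gen L ξ) = τ (AdjoinSimple.gen L ξ)) : σ = τ :=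
  AlgEquiv.coe_toAlgHom_injective <| adjoin_algHom_ext L fun x hx ↦ by
    rw [Set.mem_singleton_iff] at hx
    subst hx
    exact h

variable {ξ : Ω} {s : Finset L} {Q : L[X]}
  (hQ : Q.map (algebraMap L Ω) = ∏ w ∈ s, (X - C (ξ + algebraMap L Ω w)))
include hQ

theorem aeval_eq_prod_of_map_eq (r : Ω) :
    aeval r Q = ∏ w ∈ s, (r - (ξ + algebraMap L Ω w)) := by
  simp [aeval_def, eval₂_eq_eval_map, hQ, eval_prod]

theorem ne_zero_of_map_eq : Q ≠ 0 := by
  rintro rfl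
  rw [Polynomial.map_zero] at hQ
  exact (monic_prod_of_monic _ _ fun _ _ ↦ monic_X_sub_C _).ne_zero hQ.symm

theorem exists_mem_eq_add_of_aeval_eq_zero {r : Ω} (hr : aeval r Q = 0) :
    ∃ w ∈ s, r = ξ + algebraMap L Ω w := by
  rw [aeval_eq_prod_of_map_eq hQ, Finset.prod_eq_zero_iff] at hr
  simpa only [sub_eq_zero] using hr

theorem aeval_self_of_map_eq (h0 : 0 ∈ s) : aeval ξ Q = 0 := by
  rw [aeval_eq_prod_of_map_eq hQ]
  exact Finset.prod_eq_zero h0 (by simp)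

theorem adjoin_rootSet_eq_adjoin_simple (h0 : 0 ∈ s) : adjoin L (Q.rootSet Ω) = L⟮ξ⟯ := by
  refine le_antisymm (adjoin_le_iff.mpr fun r hr ↦ ?_) (adjoin_simple_le_iff.mpr ?_)
  · obtain ⟨w, -, rfl⟩ := exists_mem_eq_add_of_aeval_eq_zero hQ (mem_rootSet.mp hr).2
    exact add_mem (mem_adjoin_simple_self L ξ) (IntermediateField.algebraMap_mem _ w)
  · exact subset_adjoin L _ (mem_rootSet.mpr ⟨ne_zero_of_map_eq hQ, aeval_self_of_map_eq hQ h0⟩)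

theorem isSplittingField_adjoin_simple (h0 : 0 ∈ s) : Q.IsSplittingField L L⟮ξ⟯ := by
  rw [← adjoin_rootSet_eq_adjoin_simple hQ h0]
  refine adjoin_rootSet_isSplittingField ?_
  rw [hQ]
  exact Splits.prod fun w _ ↦ Splits.X_sub_C _

theorem exists_mem_algEquiv_apply_gen_eq_add (h0 : 0 ∈ s) (σ : L⟮ξ⟯ ≃ₐ[L] L⟮ξ⟯) :
    ∃ w ∈ s, σ (AdjoinSimple.gen L ξ) = AdjoinSimple.gen L ξ + algebraMap L L⟮ξ⟯ w := by
  have hgen : aeval (AdjoinSimple.gen L ξ) Q = 0 :=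
    Subtype.ext (by simpa using aeval_self_of_map_eq hQ h0)
  have hσ : aeval ((σ (AdjoinSimple.gen L ξ) : L⟮ξ⟯) : Ω) Q = 0 := by
    change aeval (algebraMap L⟮ξ⟯ Ω _) Q = 0
    rw [aeval_algebraMap_apply, aeval_algEquiv, AlgHom.comp_apply, hgen]
    simp
  obtain ⟨w, hw, h⟩ := exists_mem_eq_add_of_aeval_eq_zero hQ hσ
  exact ⟨w, hw, Subtype.ext h⟩

end TranslatesOfRoot

open IntermediateField Polynomial Classical in
/-- Let `L ⊆ Ω` be fields, `W ⊆ L` a finite subgroup of `(L,+)` with `n`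
elements, and `ξ ∈ Ω` such that `P X = ∏_{w ∈ W} (X - ξ - w)` has all coefficients in `L`.
Then `P` is separable, `L(ξ)/L` is a finite Galois extension, `σ ↦ σ ξ - ξ` is an injective
group homomorphism from `Gal(L(ξ)/L)` into `W`, hence `Gal(L(ξ)/L)` is abelian and
`[L(ξ):L]` divides `n`. -/
theorem stmt_10 {L Ω : Type*} [Field L] [Field Ω] [Algebra L Ω]
    (W : AddSubgroup L) (hWfin : (W : Set L).Finite) (n : ℕ) (hn : Nat.card W = n)
    (ξ : Ω) (P : Polynomial Ω)
    (hP : P = ∏ w ∈ hWfin.toFinset, (X - C (ξ + algebraMap L Ω w)))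
    (hcoeff : ∀ k : ℕ, P.coeff k ∈ (algebraMap L Ω).range) :
    P.Separable ∧
    FiniteDimensional L L⟮ξ⟯ ∧
    IsGalois L L⟮ξ⟯ ∧
    (∀ σ : L⟮ξ⟯ ≃ₐ[L] L⟮ξ⟯, ∃ w ∈ W,
      ((σ (AdjoinSimple.gen L ξ) - AdjoinSimple.gen L ξ : L⟮ξ⟯) : Ω) = algebraMap L Ω w) ∧
    (∀ σ τ : L⟮ξ⟯ ≃ₐ[L] L⟮ξ⟯,
      (σ * τ) (AdjoinSimple.gen L ξ) - AdjoinSimple.gen L ξ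
        = (σ (AdjoinSimple.gen L ξ) - AdjoinSimple.gen L ξ)
          + (τ (AdjoinSimple.gen L ξ) - AdjoinSimple.gen L ξ)) ∧
    (∀ σ τ : L⟮ξ⟯ ≃ₐ[L] L⟮ξ⟯,
      σ (AdjoinSimple.gen L ξ) - AdjoinSimple.gen L ξ
        = τ (AdjoinSimple.gen L ξ) - AdjoinSimple.gen L ξ → σ = τ) ∧
    (∀ σ τ : L⟮ξ⟯ ≃ₐ[L] L⟮ξ⟯, σ * τ = τ * σ) ∧
    Module.finrank L L⟮ξ⟯ ∣ n := by
  obtain ⟨Q, hQ⟩ : ∃ Q : L[X], Q.map (algebraMap L Ω) = P :=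
    (mem_lifts P).mp ((lifts_iff_coeff_lifts P).mpr hcoeff)
  rw [hP] at hQ
  have h0 : (0 : L) ∈ hWfin.toFinset := by simp
  have hsep : Q.Separable := (separable_map _).mp (hQ ▸ separable_prod_X_sub_C_add_algebraMap _ _)
  have := isSplittingField_adjoin_simple hQ h0
  have hfd : FiniteDimensional L L⟮ξ⟯ := IsSplittingField.finiteDimensional L⟮ξ⟯ Q
  have hGal : IsGalois L L⟮ξ⟯ := IsGalois.of_separable_splitting_field hsep
  have htrans (σ : L⟮ξ⟯ ≃ₐ[L] L⟮ξ⟯) : ∃ w ∈ W,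
      σ (AdjoinSimple.gen L ξ) - AdjoinSimple.gen L ξ = algebraMap L L⟮ξ⟯ w := by
    obtain ⟨w, hw, hσ⟩ := exists_mem_algEquiv_apply_gen_eq_add hQ h0 σ
    exact ⟨w, hWfin.mem_toFinset.mp hw, sub_eq_of_eq_add' hσ⟩
  have hmul (σ τ : L⟮ξ⟯ ≃ₐ[L] L⟮ξ⟯) := AlgEquiv.mul_apply_sub_self_of_mem_range (σ := σ)
    (x := AdjoinSimple.gen L ξ) ((htrans τ).elim fun w hw ↦ ⟨w, hw.2.symm⟩)
  have hinj (σ τ : L⟮ξ⟯ ≃ₐ[L] L⟮ξ⟯) (h : σ (AdjoinSimple.gen L ξ) - AdjoinSimple.gen L ξ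
      = τ (AdjoinSimple.gen L ξ) - AdjoinSimple.gen L ξ) : σ = τ :=
    algEquiv_adjoin_simple_ext (sub_left_injective h)
  refine ⟨hP ▸ separable_prod_X_sub_C_add_algebraMap _ _, hfd, hGal,
    fun σ ↦ (htrans σ).imp fun w hw ↦ ⟨hw.1, congrArg Subtype.val hw.2⟩, hmul, hinj,
    fun σ τ ↦ hinj _ _ (by rw [hmul, hmul, add_comm]), ?_⟩
  rw [← IsGalois.card_aut_eq_finrank, ← hn]
  exact card_algEquiv_dvd_of_forall_sub_self_mem (algebraMap L L⟮ξ⟯).injective htrans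
    fun σ τ ↦ algEquiv_adjoin_simple_ext
end

section
/- Let L ⊆ Ω be fields, let W ⊆ L be a finite subgroup of the additive group (L, +), and let ξ ∈ Ω be such that L(ξ)/L is a finite Galois extension and σ(ξ) − ξ ∈ W for every σ ∈ Gal(L(ξ)/L). Then the product ∏_{w ∈ W} (ξ − w) lies in L, and there exists z ∈ L(ξ) with N_{L(ξ)/L}(z) = ∏_{w ∈ W} (ξ − w); that is, ∏_{w ∈ W} (ξ − w) is a norm from L(ξ) to L. -/
/-!
Since `σ ∈ Gal(L(ξ)/L)` is determined by `σ ξ`, the map `σ ↦ σ ξ - ξ` identifies the Galois group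
with a subgroup `H ≤ W`, so `N(ξ + c) = ∏_{h ∈ H} (ξ + c + h)` for `c ∈ L`. Splitting `W` into
cosets `c + H` then exhibits `∏_{w ∈ W} (ξ - w) = ∏_{w ∈ W} (ξ + w)` as the norm of `∏_c (ξ + c)`,
with `c` running over coset representatives.
-/

open IntermediateField

theorem Finset.prod_eq_prod_image_mk_prod_out_add {A M : Type*} [AddGroup A] [CommMonoid M]
    (H : AddSubgroup A) [Fintype H] [DecidableEq (A ⧸ H)] (s : Finset A)
    (hs : ∀ a ∈ s, ∀ h ∈ H, a + h ∈ s) (f : A → M) :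
    ∏ a ∈ s, f a = ∏ q ∈ s.image (QuotientAddGroup.mk : A → A ⧸ H), ∏ h : H, f (q.out + h) := by
  rw [← prod_fiberwise_of_maps_to (g := (QuotientAddGroup.mk : A → A ⧸ H))
    (fun a ha => mem_image_of_mem _ ha)]
  refine prod_congr rfl fun q hq => ?_
  obtain ⟨a, ha, rfl⟩ := mem_image.1 hq
  obtain ⟨h₀, hout⟩ := QuotientAddGroup.mk_out_eq_add H a
  symm
  refine prod_bij (fun (h : H) _ => (a : A ⧸ H).out + h) (fun h _ => ?_) (fun h _ h' _ e => ?_)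
    (fun b hb => ?_) fun _ _ => rfl
  · rw [mem_filter, hout, add_assoc]
    refine ⟨hs a ha _ (H.add_mem h₀.2 h.2), ?_⟩
    rw [eq_comm, QuotientAddGroup.eq]
    simpa using H.add_mem h₀.2 h.2
  · exact Subtype.ext (add_left_cancel e)
  · obtain ⟨-, hb⟩ := mem_filter.1 hb
    refine ⟨⟨-(a : A ⧸ H).out + b, QuotientAddGroup.eq.1 ?_⟩, mem_univ _, by simp⟩
    rw [hb, QuotientAddGroup.out_eq']

namespace IntermediateField.AdjoinSimple

variable (L : Type*) {Ω : Type*} [Field L] [Field Ω] [Algebra L Ω] (ξ : Ω)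

theorem algEquiv_ext {σ τ : L⟮ξ⟯ ≃ₐ[L] L⟮ξ⟯} (h : σ (gen L ξ) = τ (gen L ξ)) : σ = τ := by
  have : σ.toAlgHom = τ.toAlgHom := adjoin_algHom_ext L fun x hx => by
    rcases hx with rfl
    exact h
  exact AlgEquiv.ext (AlgHom.congr_fun this)

theorem eq_of_apply_gen_eq_add {σ : L⟮ξ⟯ ≃ₐ[L] L⟮ξ⟯} {a b : L}
    (ha : σ (gen L ξ) = gen L ξ + algebraMap L L⟮ξ⟯ a)
    (hb : σ (gen L ξ) = gen L ξ + algebraMap L L⟮ξ⟯ b) : a = b :=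
  (algebraMap L L⟮ξ⟯).injective (add_left_cancel (ha.symm.trans hb))

def translationSubgroup : AddSubgroup L where
  carrier := {a | ∃ σ : L⟮ξ⟯ ≃ₐ[L] L⟮ξ⟯, σ (gen L ξ) = gen L ξ + algebraMap L L⟮ξ⟯ a}
  zero_mem' := ⟨1, by simp⟩
  add_mem' := by
    rintro a b ⟨σ, hσ⟩ ⟨τ, hτ⟩
    refine ⟨σ * τ, ?_⟩
    rw [AlgEquiv.mul_apply, hτ, map_add, hσ, AlgEquiv.commutes, map_add, add_assoc]
  neg_mem' := by
    rintro a ⟨σ, hσ⟩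
    refine ⟨σ⁻¹, σ.injective ?_⟩
    rw [← AlgEquiv.mul_apply, mul_inv_cancel, AlgEquiv.one_apply, map_add, AlgEquiv.commutes, hσ,
      map_neg, add_neg_cancel_right]

theorem translationSubgroup_le {W : AddSubgroup L}
    (hW : ∀ σ : L⟮ξ⟯ ≃ₐ[L] L⟮ξ⟯, ∃ w ∈ W, σ (gen L ξ) = gen L ξ + algebraMap L L⟮ξ⟯ w) :
    translationSubgroup L ξ ≤ W := by
  rintro a ⟨σ, hσ⟩
  obtain ⟨w, hw, hσw⟩ := hW σ
  rwa [eq_of_apply_gen_eq_add L ξ hσ hσw]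

variable [FiniteDimensional L L⟮ξ⟯]

instance : Finite (translationSubgroup L ξ) :=
  Finite.of_injective (fun a : translationSubgroup L ξ => a.2.choose) fun a b hab => by
    have ha := a.2.choose_spec
    rw [show a.2.choose = b.2.choose from hab] at ha
    exact Subtype.ext (eq_of_apply_gen_eq_add L ξ ha b.2.choose_spec)

noncomputable instance : Fintype (translationSubgroup L ξ) := Fintype.ofFinite _

variable [IsGalois L L⟮ξ⟯]

theorem algebraMap_norm_gen_add
    (htrans : ∀ σ : L⟮ξ⟯ ≃ₐ[L] L⟮ξ⟯, ∃ a : L, σ (gen L ξ) = gen L ξ + algebraMap L L⟮ξ⟯ a) (c : L) :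
    algebraMap L L⟮ξ⟯ (Algebra.norm L (gen L ξ + algebraMap L L⟮ξ⟯ c)) =
      ∏ h : translationSubgroup L ξ, (gen L ξ + algebraMap L L⟮ξ⟯ (c + h)) := by
  choose χ hχ using htrans
  rw [Algebra.norm_eq_prod_automorphisms]
  refine Fintype.prod_bijective (fun σ => ⟨χ σ, σ, hχ σ⟩) ⟨fun σ τ hστ => ?_, ?_⟩ _ _ fun σ => ?_
  · exact algEquiv_ext L ξ (by rw [hχ, hχ, show χ σ = χ τ from congr_arg Subtype.val hστ])
  · rintro ⟨a, σ, hσ⟩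
    exact ⟨σ, Subtype.ext (eq_of_apply_gen_eq_add L ξ (hχ σ) hσ)⟩
  · rw [map_add, hχ, AlgEquiv.commutes, map_add, add_assoc, add_comm (algebraMap L _ (χ σ))]

theorem exists_algebraMap_norm_eq_prod_gen_add
    (htrans : ∀ σ : L⟮ξ⟯ ≃ₐ[L] L⟮ξ⟯, ∃ a : L, σ (gen L ξ) = gen L ξ + algebraMap L L⟮ξ⟯ a)
    (s : Finset L) (hs : ∀ a ∈ s, ∀ h ∈ translationSubgroup L ξ, a + h ∈ s) :
    ∃ z : L⟮ξ⟯,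
      algebraMap L L⟮ξ⟯ (Algebra.norm L z) = ∏ a ∈ s, (gen L ξ + algebraMap L L⟮ξ⟯ a) := by
  classical
  refine ⟨∏ q ∈ s.image (QuotientAddGroup.mk : L → L ⧸ translationSubgroup L ξ),
    (gen L ξ + algebraMap L L⟮ξ⟯ q.out), ?_⟩
  rw [map_prod, map_prod, Finset.prod_eq_prod_image_mk_prod_out_add _ s hs]
  exact Finset.prod_congr rfl fun q _ => algebraMap_norm_gen_add L ξ htrans _

end IntermediateField.AdjoinSimple

open IntermediateField Classical in
/-- Let `L ⊆ Ω` be fields, `W ⊆ L` a finite subgroup of `(L,+)`, and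
`ξ ∈ Ω` such that `L(ξ)/L` is a finite Galois extension with `σ ξ - ξ ∈ W` for every
`σ ∈ Gal(L(ξ)/L)`. Then `∏_{w ∈ W} (ξ - w)` lies in `L`, and it is a norm from `L(ξ)`:
there is `z ∈ L(ξ)` with `N_{L(ξ)/L}(z) = ∏_{w ∈ W} (ξ - w)`. -/
theorem stmt_11 {L Ω : Type*} [Field L] [Field Ω] [Algebra L Ω]
    (W : AddSubgroup L) (hWfin : (W : Set L).Finite)
    (ξ : Ω)
    [FiniteDimensional L L⟮ξ⟯] (hGal : IsGalois L L⟮ξ⟯)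
    (hσ : ∀ σ : L⟮ξ⟯ ≃ₐ[L] L⟮ξ⟯, ∃ w ∈ W,
      ((σ (AdjoinSimple.gen L ξ) - AdjoinSimple.gen L ξ : L⟮ξ⟯) : Ω) = algebraMap L Ω w) :
    ∃ (a : L) (z : L⟮ξ⟯),
      algebraMap L Ω a = ∏ w ∈ hWfin.toFinset, (ξ - algebraMap L Ω w) ∧
      Algebra.norm L z = a := by
  have htrans (σ : L⟮ξ⟯ ≃ₐ[L] L⟮ξ⟯) :
      ∃ w ∈ W, σ (AdjoinSimple.gen L ξ) = AdjoinSimple.gen L ξ + algebraMap L L⟮ξ⟯ w := by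
    obtain ⟨w, hw, hσw⟩ := hσ σ
    exact ⟨w, hw, Subtype.val_injective (by simpa [sub_eq_iff_eq_add'] using hσw)⟩
  have hstable : ∀ a ∈ hWfin.toFinset, ∀ h ∈ AdjoinSimple.translationSubgroup L ξ,
      a + h ∈ hWfin.toFinset := fun a ha h hh => by
    simp only [Set.Finite.mem_toFinset, SetLike.mem_coe] at ha ⊢
    exact W.add_mem ha (AdjoinSimple.translationSubgroup_le L ξ htrans hh)
  obtain ⟨z, hz⟩ := AdjoinSimple.exists_algebraMap_norm_eq_prod_gen_add L ξ
    (fun σ => (htrans σ).imp fun _ => And.right) _ hstable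
  refine ⟨Algebra.norm L z, z, ?_, rfl⟩
  calc algebraMap L Ω (Algebra.norm L z)
      = ((algebraMap L L⟮ξ⟯ (Algebra.norm L z) : L⟮ξ⟯) : Ω) := rfl
    _ = ∏ w ∈ hWfin.toFinset, (ξ + algebraMap L Ω w) := by rw [hz]; push_cast; rfl
    _ = ∏ w ∈ hWfin.toFinset, (ξ - algebraMap L Ω w) := by
      refine Finset.prod_nbij' Neg.neg Neg.neg ?_ ?_ (fun _ _ => neg_neg _) (fun _ _ => neg_neg _)
        fun w _ => by rw [map_neg, sub_neg_eq_add]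
      all_goals intro w hw; simpa using W.neg_mem (by simpa using hw)
end
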